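/- arXiv:2103.06975 — 6 statements merged into one kernel-verified Lean document; each statement's English description precedes it below -/
import Mathlib

section
/- Let g be a nonzero homogeneous polynomial of positive degree in C[z_1,...,z_n] and let f be a nonzero homogeneous polynomial of positive degree satisfying (deg g)·g·(∂f/∂z_l) = (deg f)·f·(∂g/∂z_l) for all l ∈ {1,...,n}. Then every prime factor of g divides f, and every prime factor of f divides g. -/
/-! Let `p` be a prime factor of `g`, exactly `k ≥ 1` times, with `g = p ^ k * q`, and suppose
`p ∤ f`. Substituting `∂g = k p^(k-1) q ∂p + p^k ∂q` into the identity and cancelling `p^(k-1)`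
shows `p ∣ k · deg f · f q ∂p`, hence `p ∣ ∂p / ∂z_l` for every `l`. Since differentiation lowers
the degree in `z_l`, this forces every `∂p / ∂z_l` to vanish, so in characteristic zero `p` is a
constant, contradicting primality. The second claim is the first with `f` and `g` swapped. -/

open MvPolynomial

namespace MvPolynomial

variable {σ R : Type*} [CommSemiring R]

theorem degreeOf_pderiv_lt {i : σ} {p : MvPolynomial σ R} (h : pderiv i p ≠ 0) :
    degreeOf i (pderiv i p) < degreeOf i p := by
  classical
  have key : ∀ m ∈ (pderiv i p).support, m i < degreeOf i p := fun m hm => by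
    have hcoeff : coeff (m + Finsupp.single i 1) p ≠ 0 := by
      rw [mem_support_iff, coeff_pderiv] at hm
      exact left_ne_zero_of_mul hm
    simpa using monomial_le_degreeOf i (mem_support_iff.2 hcoeff)
  obtain ⟨m, hm⟩ := support_nonempty.2 h
  exact (degreeOf_lt_iff ((Nat.zero_le _).trans_lt (key m hm))).2 key

theorem pderiv_eq_zero_of_dvd_pderiv [NoZeroDivisors R] {i : σ} {p : MvPolynomial σ R}
    (h : p ∣ pderiv i p) : pderiv i p = 0 := by
  by_contra hne
  obtain ⟨q, hq⟩ := h
  have hp : p ≠ 0 := left_ne_zero_of_mul (hq ▸ hne)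
  have hq0 : q ≠ 0 := right_ne_zero_of_mul (hq ▸ hne)
  have hlt := degreeOf_pderiv_lt hne
  rw [hq, degreeOf_mul_eq hp hq0] at hlt
  omega

theorem apply_eq_zero_of_pderiv_eq_zero [NoZeroDivisors R] [CharZero R] {i : σ}
    {p : MvPolynomial σ R} (h : pderiv i p = 0) {m : σ →₀ ℕ} (hm : m ∈ p.support) :
    m i = 0 := by
  classical
  by_contra hmi
  obtain ⟨m', rfl⟩ : ∃ m', m = m' + Finsupp.single i 1 :=
    ⟨m - Finsupp.single i 1, (tsub_add_cancel_of_le <|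
      Finsupp.single_le_iff.2 (Nat.one_le_iff_ne_zero.2 hmi)).symm⟩
  have hcoeff := coeff_pderiv (i := i) p m'
  rw [h, coeff_zero, eq_comm, mul_eq_zero] at hcoeff
  exact hcoeff.elim (mem_support_iff.1 hm) (Nat.cast_add_one_ne_zero _)

theorem eq_C_of_forall_pderiv_eq_zero [NoZeroDivisors R] [CharZero R] {p : MvPolynomial σ R}
    (h : ∀ i, pderiv i p = 0) : p = C (coeff 0 p) :=
  totalDegree_eq_zero_iff_eq_C.1 <| (totalDegree_eq_zero_iff _ p).2 fun _ hm i =>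
    apply_eq_zero_of_pderiv_eq_zero (h i) hm

end MvPolynomial

theorem Prime.not_forall_dvd_pderiv {σ K : Type*} [Field K] [CharZero K]
    {p : MvPolynomial σ K} (hp : Prime p) : ¬ ∀ i, p ∣ pderiv i p := fun h => by
  have hC := eq_C_of_forall_pderiv_eq_zero fun i => pderiv_eq_zero_of_dvd_pderiv (h i)
  refine hp.not_isUnit (hC ▸ (isUnit_iff_ne_zero.2 fun h0 => hp.ne_zero ?_).map C)
  rw [hC, h0, map_zero]

theorem Prime.dvd_derivation_self {R A : Type*} [CommSemiring R] [CommRing A] [IsDomain A]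
    [WfDvdMonoid A] [Algebra R A] [Algebra ℚ A] (D : Derivation R A A) {p f g a b : A}
    (hp : Prime p) (hg : g ≠ 0) (hpg : p ∣ g) (hpf : ¬ p ∣ f) (hb : IsUnit b)
    (heq : a * g * D f = b * f * D g) : p ∣ D p := by
  obtain ⟨q, hgq, hpq⟩ :=
    (FiniteMultiplicity.of_prime_left hp hg).exists_eq_pow_mul_and_not_dvd
  obtain ⟨k, hk⟩ : ∃ k, multiplicity p g = k + 1 := Nat.exists_eq_add_one.2 <|
    Nat.pos_of_ne_zero fun h0 => hpq (by rwa [hgq, h0, pow_zero, one_mul] at hpg)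
  rw [hk] at hgq
  have hunit : IsUnit ((k + 1 : ℕ) : A) := by
    simpa using (Nat.cast_add_one_ne_zero k : ((k : ℚ) + 1) ≠ 0).isUnit.map (algebraMap ℚ A)
  have hcancel : p ^ k * (a * (p * q) * D f) =
      p ^ k * (b * f * ((k + 1 : ℕ) * D p * q + p * D q)) := by
    rw [hgq, Derivation.leibniz, Derivation.leibniz_pow] at heq
    simp only [smul_eq_mul, nsmul_eq_mul, Nat.add_sub_cancel] at heq
    linear_combination heq
  have hdvd : p ∣ b * ((k + 1 : ℕ) * (f * (q * D p))) := ⟨a * q * D f - b * f * D q, by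
    linear_combination -(mul_left_cancel₀ (pow_ne_zero k hp.ne_zero) hcancel)⟩
  rw [hb.dvd_mul_left, hunit.dvd_mul_left] at hdvd
  exact ((hp.dvd_or_dvd hdvd).resolve_left hpf |> hp.dvd_or_dvd).resolve_left hpq

theorem Prime.dvd_of_dvd_of_mul_pderiv_eq {σ K : Type*} [Field K] [CharZero K]
    {p f g : MvPolynomial σ K} {a b : K} (hp : Prime p) (hg : g ≠ 0) (hb : b ≠ 0)
    (heq : ∀ i, C a * g * pderiv i f = C b * f * pderiv i g) (hpg : p ∣ g) : p ∣ f :=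
  by_contra fun hpf => hp.not_forall_dvd_pderiv fun i =>
    -- without `R := K`, unifying `D` with the coercion of `pderiv i` does not terminate
    hp.dvd_derivation_self (R := K) (pderiv i) hg hpg hpf (hb.isUnit.map C) (heq i)

theorem stmt0_general {n : ℕ} (g f : MvPolynomial (Fin n) ℂ) (dg df : ℕ)
    (hg0 : g ≠ 0) (hdg : 0 < dg)
    (hf0 : f ≠ 0) (hdf : 0 < df)
    (heq : ∀ l : Fin n, C (dg : ℂ) * g * pderiv l f = C (df : ℂ) * f * pderiv l g) :
    (∀ p : MvPolynomial (Fin n) ℂ, Prime p → p ∣ g → p ∣ f) ∧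
    (∀ p : MvPolynomial (Fin n) ℂ, Prime p → p ∣ f → p ∣ g) :=
  ⟨fun _ hp => hp.dvd_of_dvd_of_mul_pderiv_eq hg0 (Nat.cast_ne_zero.2 hdf.ne') heq,
    fun _ hp => hp.dvd_of_dvd_of_mul_pderiv_eq hf0 (Nat.cast_ne_zero.2 hdg.ne')
      fun l => (heq l).symm⟩

/-- If `g`, `f` are nonzero homogeneous polynomials of positive degree in
`ℂ[z_1,…,z_n]` with `(deg g)·g·∂f/∂z_l = (deg f)·f·∂g/∂z_l` for all `l`, then every prime
factor of `g` divides `f` and every prime factor of `f` divides `g`. -/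
theorem stmt0 {n : ℕ} (g f : MvPolynomial (Fin n) ℂ) (dg df : ℕ)
    (hg0 : g ≠ 0) (hgh : g.IsHomogeneous dg) (hdg : 0 < dg)
    (hf0 : f ≠ 0) (hfh : f.IsHomogeneous df) (hdf : 0 < df)
    (heq : ∀ l : Fin n, C (dg : ℂ) * g * pderiv l f = C (df : ℂ) * f * pderiv l g) :
    (∀ p : MvPolynomial (Fin n) ℂ, Prime p → p ∣ g → p ∣ f) ∧
    (∀ p : MvPolynomial (Fin n) ℂ, Prime p → p ∣ f → p ∣ g) :=
  stmt0_general g f dg df hg0 hdg hf0 hdf heq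
end

section
/- Let g be a nonzero homogeneous polynomial of positive degree in C[z_1,...,z_n], let M_g be the largest positive integer m such that g is an m-th power of a homogeneous polynomial, and let h be a homogeneous polynomial with g = h^{M_g}. If f is a nonzero homogeneous polynomial of positive degree satisfying (deg g)·g·(∂f/∂z_l) = (deg f)·f·(∂g/∂z_l) for all l ∈ {1,...,n}, then M_g·(deg f)/(deg g) is a positive integer and f = c·h^{M_g·(deg f)/(deg g)} for some nonzero constant c ∈ C. -/
/-!
With `F = f ^ deg g` and `G = g ^ deg f` the hypothesis becomes `∂F · G = ∂G · F`. Dividing out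
`gcd F G`, the coprime cofactors `u`, `v` satisfy `∂u · v = ∂v · u`, so `u ∣ ∂u`; by Euler's identity
the homogeneous `u` is then constant, and so is `v`. Hence `f ^ deg g ~ h ^ (M · deg f)`. Comparing
prime multiplicities, `h` is up to a unit an `a`-th power, `a = deg g / gcd (deg g, M · deg f)`, and
since `ℂ` is algebraically closed `g` is then an `(a · M)`-th power of a homogeneous polynomial.
Maximality of `M` gives `a = 1`, i.e. `deg g ∣ M · deg f`, and `f ^ deg g ~ (h ^ k) ^ deg g`
yields `f ~ h ^ k`.

Factors of homogeneous polynomials are homogeneous: in `t ↦ p(t • z)` the trailing and leading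
degrees in `t` are both additive under multiplication.
-/

open MvPolynomial

open UniqueFactorizationMonoid in
theorem exists_associated_pow_div_gcd_of_associated_pow {α : Type*} [CommMonoidWithZero α]
    [UniqueFactorizationMonoid α] {x y : α} {a b : ℕ} (ha : a ≠ 0) (hy : y ≠ 0)
    (h : Associated (x ^ a) (y ^ b)) : ∃ w, Associated (w ^ (a / a.gcd b)) y := by
  classical
  let : StrongNormalizationMonoid α := UniqueFactorizationMonoid.strongNormalizationMonoid
  have hcount : ∀ q, a / a.gcd b ∣ (normalizedFactors y).count q := fun q => by
    have hq := congrArg (Multiset.count q) h.normalizedFactors_eq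
    rw [normalizedFactors_pow, normalizedFactors_pow, Multiset.count_nsmul,
      Multiset.count_nsmul] at hq
    have hgcd := Nat.gcd_pos_of_pos_left b (Nat.pos_of_ne_zero ha)
    refine (Nat.coprime_div_gcd_div_gcd hgcd).dvd_of_dvd_mul_left ?_
    rw [← Nat.mul_div_right_comm (Nat.gcd_dvd_right a b), ← hq,
      Nat.mul_div_right_comm (Nat.gcd_dvd_left a b)]
    exact dvd_mul_right _ _
  obtain ⟨u, hu⟩ := Multiset.exists_smul_of_dvd_count _ fun q _ => hcount q
  refine ⟨u.prod, ?_⟩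
  rw [← Multiset.prod_nsmul, ← hu]
  exact prod_normalizedFactors hy

theorem Associated.of_pow_pow {α : Type*} [CommMonoidWithZero α] [UniqueFactorizationMonoid α]
    {x y : α} {n : ℕ} (hn : n ≠ 0) (h : Associated (x ^ n) (y ^ n)) : Associated x y :=
  associated_of_dvd_dvd ((UniqueFactorizationMonoid.pow_dvd_pow_iff_dvd hn).1 h.dvd)
    ((UniqueFactorizationMonoid.pow_dvd_pow_iff_dvd hn).1 h.symm.dvd)

namespace MvPolynomial

section HomogeneousFactors

variable {σ R : Type*} [CommSemiring R]

/-- `p ↦ p(t • z)` as a polynomial in `t`; its `t ^ k`-coefficient is the degree-`k` component. -/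
noncomputable def scaleExpansion : MvPolynomial σ R →ₐ[R] Polynomial (MvPolynomial σ R) :=
  aeval fun i => Polynomial.C (X i) * Polynomial.X

theorem scaleExpansion_monomial (d : σ →₀ ℕ) (r : R) :
    scaleExpansion (monomial d r) = Polynomial.monomial d.degree (monomial d r) := by
  rw [scaleExpansion, aeval_monomial, Finsupp.prod]
  simp only [mul_pow, Finset.prod_mul_distrib, Finset.prod_pow_eq_pow_sum]
  rw [← Polynomial.C_mul_X_pow_eq_monomial, monomial_eq, Finsupp.prod, map_mul, map_prod]
  simp only [map_pow, Polynomial.algebraMap_apply, algebraMap_eq]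
  rw [Finsupp.degree_apply, mul_assoc]

theorem coeff_scaleExpansion (p : MvPolynomial σ R) (k : ℕ) :
    (scaleExpansion p).coeff k = homogeneousComponent k p := by
  induction p using MvPolynomial.induction_on' with
  | monomial d r =>
    rw [scaleExpansion_monomial, Polynomial.coeff_monomial,
      homogeneousComponent_of_mem (isHomogeneous_monomial r rfl)]
    simp only [eq_comm]
  | add p q hp hq => rw [map_add, Polynomial.coeff_add, hp, hq, map_add]

theorem eval_one_scaleExpansion (p : MvPolynomial σ R) : (scaleExpansion p).eval 1 = p := by
  induction p using MvPolynomial.induction_on' with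
  | monomial d r => simp [scaleExpansion_monomial]
  | add p q hp hq => rw [map_add, Polynomial.eval_add, hp, hq]

theorem scaleExpansion_injective : Function.Injective (scaleExpansion (σ := σ) (R := R)) :=
  Function.LeftInverse.injective eval_one_scaleExpansion

theorem IsHomogeneous.scaleExpansion_eq {p : MvPolynomial σ R} {m : ℕ} (hp : p.IsHomogeneous m) :
    scaleExpansion p = Polynomial.monomial m p := by
  ext k : 1
  rw [coeff_scaleExpansion, Polynomial.coeff_monomial, homogeneousComponent_of_mem hp]
  simp only [eq_comm]

theorem isHomogeneous_of_natTrailingDegree_scaleExpansion {p : MvPolynomial σ R}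
    (h : (scaleExpansion p).natTrailingDegree = (scaleExpansion p).natDegree) :
    p.IsHomogeneous (scaleExpansion p).natDegree := by
  intro d hd
  by_contra hne
  have hcomp : homogeneousComponent d.degree p = 0 := by
    rw [← coeff_scaleExpansion]
    rcases lt_or_gt_of_ne (show d.degree ≠ _ by rwa [Finsupp.degree_eq_weight_one]) with hlt | hgt
    · exact Polynomial.coeff_eq_zero_of_lt_natTrailingDegree (h ▸ hlt)
    · exact Polynomial.coeff_eq_zero_of_natDegree_lt hgt
  simpa [coeff_homogeneousComponent, hd] using congrArg (coeff d) hcomp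

theorem IsHomogeneous.exists_isHomogeneous_of_dvd [NoZeroDivisors R] {p q : MvPolynomial σ R}
    {m : ℕ} (hq : q.IsHomogeneous m) (hq0 : q ≠ 0) (hpq : p ∣ q) : ∃ a, p.IsHomogeneous a := by
  obtain ⟨r, rfl⟩ := hpq
  have hp : scaleExpansion p ≠ 0 :=
    (map_ne_zero_iff _ scaleExpansion_injective).2 (left_ne_zero_of_mul hq0)
  have hr : scaleExpansion r ≠ 0 :=
    (map_ne_zero_iff _ scaleExpansion_injective).2 (right_ne_zero_of_mul hq0)
  have hdeg : (scaleExpansion p).natDegree + (scaleExpansion r).natDegree = m := by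
    rw [← Polynomial.natDegree_mul hp hr, ← map_mul, hq.scaleExpansion_eq,
      Polynomial.natDegree_monomial_eq _ hq0]
  have htrail :
      (scaleExpansion p).natTrailingDegree + (scaleExpansion r).natTrailingDegree = m := by
    rw [← Polynomial.natTrailingDegree_mul hp hr, ← map_mul, hq.scaleExpansion_eq,
      Polynomial.natTrailingDegree_monomial hq0]
  have := (scaleExpansion p).natTrailingDegree_le_natDegree
  have := (scaleExpansion r).natTrailingDegree_le_natDegree
  exact ⟨_, isHomogeneous_of_natTrailingDegree_scaleExpansion (by omega)⟩

end HomogeneousFactors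

section EulerRelation

variable {σ K : Type*} [Field K] [CharZero K] [Fintype σ]

theorem IsHomogeneous.isUnit_of_forall_dvd_pderiv {u : MvPolynomial σ K} {e : ℕ}
    (hu : u.IsHomogeneous e) (hu0 : u ≠ 0) (h : ∀ i, u ∣ pderiv i u) : IsUnit u := by
  choose r hr using h
  have he : (e : MvPolynomial σ K) = ∑ i, X i * r i := by
    refine mul_left_cancel₀ hu0 ?_
    rw [Finset.mul_sum, mul_comm, ← nsmul_eq_mul, ← hu.sum_X_mul_pderiv]
    simp only [hr]
    exact Finset.sum_congr rfl fun i _ => by ring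
  have he0 : e = 0 := by
    simpa using congrArg constantCoeff he
  subst he0
  rw [← totalDegree_zero_iff_isHomogeneous, totalDegree_eq_zero_iff_eq_C] at hu
  rw [hu] at hu0 ⊢
  exact (isUnit_iff_ne_zero.2 fun hc => hu0 (by rw [hc, map_zero])).map C

theorem associated_of_forall_pderiv_mul_eq {p q : MvPolynomial σ K} {m n : ℕ}
    (hp : p.IsHomogeneous m) (hq : q.IsHomogeneous n) (hp0 : p ≠ 0) (hq0 : q ≠ 0)
    (h : ∀ i, pderiv i p * q = pderiv i q * p) : Associated p q := by
  let : GCDMonoid (MvPolynomial σ K) := UniqueFactorizationMonoid.toGCDMonoid _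
  obtain ⟨u, v, hpu, hqv, huv⟩ := extract_gcd p q
  set d := gcd p q
  have hd0 : d ≠ 0 := left_ne_zero_of_mul (hpu ▸ hp0)
  have hcop : IsRelPrime u v := gcd_isUnit_iff_isRelPrime.mp huv
  -- the `pderiv i d` terms cancel, leaving `d ^ 2 * (∂u * v - ∂v * u) = 0`
  have huv_rel : ∀ i, pderiv i u * v = pderiv i v * u := fun i => by
    have hi := h i
    rw [hpu, hqv, pderiv_mul, pderiv_mul] at hi
    exact mul_left_cancel₀ (pow_ne_zero 2 hd0) (by linear_combination hi)
  have hu : IsUnit u := by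
    obtain ⟨e, he⟩ := hp.exists_isHomogeneous_of_dvd hp0 (Dvd.intro_left d hpu.symm)
    refine he.isUnit_of_forall_dvd_pderiv (right_ne_zero_of_mul (hpu ▸ hp0)) fun i => ?_
    exact hcop.dvd_of_dvd_mul_right ⟨pderiv i v, by rw [huv_rel i, mul_comm]⟩
  have hv : IsUnit v := by
    obtain ⟨e, he⟩ := hq.exists_isHomogeneous_of_dvd hq0 (Dvd.intro_left d hqv.symm)
    refine he.isUnit_of_forall_dvd_pderiv (right_ne_zero_of_mul (hqv ▸ hq0)) fun i => ?_
    exact hcop.symm.dvd_of_dvd_mul_right ⟨pderiv i u, by rw [← huv_rel i, mul_comm]⟩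
  rw [hpu, hqv]
  exact (associated_mul_unit_right d u hu).symm.trans (associated_mul_unit_right d v hv)

end EulerRelation

theorem pderiv_pow_mul_pow_eq {σ R : Type*} [CommRing R] {f g : MvPolynomial σ R} {a b : ℕ}
    (ha : a ≠ 0) (hb : b ≠ 0) (i : σ) (h : a * g * pderiv i f = b * f * pderiv i g) :
    pderiv i (f ^ a) * g ^ b = pderiv i (g ^ b) * f ^ a := by
  obtain ⟨a, rfl⟩ := Nat.exists_eq_add_one_of_ne_zero ha
  obtain ⟨b, rfl⟩ := Nat.exists_eq_add_one_of_ne_zero hb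
  simp only [pderiv_pow, add_tsub_cancel_right]
  linear_combination f ^ a * g ^ b * h

theorem exists_isHomogeneous_pow_eq_of_associated {σ K : Type*} [Field K] [IsAlgClosed K]
    {w p : MvPolynomial σ K} {a m : ℕ} (ha : a ≠ 0) (hp : p.IsHomogeneous m) (hp0 : p ≠ 0)
    (hw : Associated (w ^ a) p) : ∃ v : MvPolynomial σ K, (∃ e, v.IsHomogeneous e) ∧ p = v ^ a := by
  obtain ⟨e, he⟩ := hp.exists_isHomogeneous_of_dvd hp0 ((dvd_pow_self w ha).trans hw.dvd)
  obtain ⟨u, hu⟩ := hw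
  obtain ⟨c, -, hc⟩ := isUnit_iff_eq_C_of_isReduced.1 u.isUnit
  obtain ⟨z, hz⟩ := IsAlgClosed.exists_pow_nat_eq c (Nat.pos_of_ne_zero ha)
  refine ⟨C z * w, ⟨e, he.C_mul z⟩, ?_⟩
  rw [← hu, hc, mul_pow, ← map_pow, hz, mul_comm]

end MvPolynomial

theorem stmt3_general {n : ℕ} (g f h : MvPolynomial (Fin n) ℂ) (dg df dh M : ℕ)
    (hg0 : g ≠ 0) (hgh : g.IsHomogeneous dg) (hdg : 0 < dg)
    (hM : 0 < M)
    (hMmax : ∀ m : ℕ, 0 < m →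
      (∃ h' : MvPolynomial (Fin n) ℂ, (∃ e : ℕ, h'.IsHomogeneous e) ∧ g = h' ^ m) → m ≤ M)
    (hhh : h.IsHomogeneous dh) (hghM : g = h ^ M)
    (hf0 : f ≠ 0) (hfh : f.IsHomogeneous df) (hdf : 0 < df)
    (heq : ∀ l : Fin n, C (dg : ℂ) * g * pderiv l f = C (df : ℂ) * f * pderiv l g) :
    (dg ∣ M * df ∧ 0 < M * df / dg) ∧
    ∃ c : ℂ, c ≠ 0 ∧ f = C c * h ^ (M * df / dg) := by
  have hh0 : h ≠ 0 := by rintro rfl; exact hg0 (by rw [hghM, zero_pow hM.ne'])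
  have hassoc : Associated (f ^ dg) (h ^ (M * df)) := by
    rw [pow_mul, ← hghM]
    refine associated_of_forall_pderiv_mul_eq (hfh.pow dg) (hgh.pow df) (pow_ne_zero _ hf0)
      (pow_ne_zero _ hg0) fun l => pderiv_pow_mul_pow_eq hdg.ne' hdf.ne' l ?_
    simpa only [map_natCast] using heq l
  set a := dg / dg.gcd (M * df)
  have ha : a ≠ 0 := (Nat.div_pos (Nat.gcd_le_left _ hdg) (Nat.gcd_pos_of_pos_left _ hdg)).ne'
  obtain ⟨w, hw⟩ := exists_associated_pow_div_gcd_of_associated_pow hdg.ne' hh0 hassoc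
  obtain ⟨v, hv, hhv⟩ := exists_isHomogeneous_pow_eq_of_associated ha hhh hh0 hw
  have haM : a * M ≤ M :=
    hMmax _ (Nat.mul_pos (Nat.pos_of_ne_zero ha) hM) ⟨v, hv, by rw [hghM, hhv, pow_mul]⟩
  have hdvd : dg ∣ M * df := by
    have ha1 : a = 1 := by nlinarith [Nat.pos_of_ne_zero ha]
    rw [← Nat.div_mul_cancel (Nat.gcd_dvd_left dg (M * df)), show dg / _ = 1 from ha1, one_mul]
    exact Nat.gcd_dvd_right _ _
  refine ⟨⟨hdvd, Nat.div_pos (Nat.le_of_dvd (by positivity) hdvd) hdg⟩, ?_⟩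
  have hfk : Associated f (h ^ (M * df / dg)) := by
    refine Associated.of_pow_pow hdg.ne' ?_
    rwa [← pow_mul, Nat.div_mul_cancel hdvd]
  obtain ⟨u, hu⟩ := hfk.symm
  obtain ⟨c, hc, hcu⟩ := isUnit_iff_eq_C_of_isReduced.1 u.isUnit
  exact ⟨c, hc.ne_zero, by rw [← hu, hcu, mul_comm]⟩

/-- Let `g` be a nonzero homogeneous polynomial of positive degree, `M = M_g`
the largest positive integer such that `g` is an `M`-th power of a homogeneous polynomial,
and `h` homogeneous with `g = h^M`. If `f` is nonzero homogeneous of positive degree with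
`(deg g)·g·∂f/∂z_l = (deg f)·f·∂g/∂z_l` for all `l`, then `M·(deg f)/(deg g)` is a positive
integer and `f = c·h^{M·deg f/deg g}` for some nonzero constant `c`. -/
theorem stmt3 {n : ℕ} (g f h : MvPolynomial (Fin n) ℂ) (dg df dh M : ℕ)
    (hg0 : g ≠ 0) (hgh : g.IsHomogeneous dg) (hdg : 0 < dg)
    (hM : 0 < M)
    (hMmem : ∃ h' : MvPolynomial (Fin n) ℂ, (∃ e : ℕ, h'.IsHomogeneous e) ∧ g = h' ^ M)
    (hMmax : ∀ m : ℕ, 0 < m →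
      (∃ h' : MvPolynomial (Fin n) ℂ, (∃ e : ℕ, h'.IsHomogeneous e) ∧ g = h' ^ m) → m ≤ M)
    (hhh : h.IsHomogeneous dh) (hghM : g = h ^ M)
    (hf0 : f ≠ 0) (hfh : f.IsHomogeneous df) (hdf : 0 < df)
    (heq : ∀ l : Fin n, C (dg : ℂ) * g * pderiv l f = C (df : ℂ) * f * pderiv l g) :
    (dg ∣ M * df ∧ 0 < M * df / dg) ∧
    ∃ c : ℂ, c ≠ 0 ∧ f = C c * h ^ (M * df / dg) :=
  stmt3_general g f h dg df dh M hg0 hgh hdg hM hMmax hhh hghM hf0 hfh hdf heq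
end

section
/- Let P: C^n → R be a homogeneous plurisubharmonic polynomial of degree 2k without pluriharmonic terms, written as P(z) = Σ_{(α,β)∈J} a_{α,β} z^α z̄^β where J consists of pairs of multi-indices with |α|>0, |β|>0, |α|+|β|=2k. Let A = {α : |α|=k and a_{α,α} ≠ 0}, and let C = {(c_1,...,c_n) ∈ C^n : Σ_j α_j c_j = 0 for all α ∈ A}. Then for all (c_1,...,c_n) ∈ C and all z = (z_1,...,z_n) ∈ C^n, the Levi form of P at z in the direction (c_1 z_1,...,c_n z_n) vanishes: L(P; z, (c_1 z_1,...,c_n z_n)^t) = 0. -/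
open Finset
open scoped ComplexConjugate

/-- Multi-index power `z^α = ∏ i, z i ^ α i`. -/
noncomputable def mpow {n : ℕ} (z : Fin n → ℂ) (α : Fin n →₀ ℕ) : ℂ :=
  ∏ i, z i ^ α i

/-- Value of the polynomial `P(z) = ∑_{(α,β)∈J} a_{α,β} z^α z̄^β`. -/
noncomputable def pval {n : ℕ} (J : Finset ((Fin n →₀ ℕ) × (Fin n →₀ ℕ)))
    (a : (Fin n →₀ ℕ) × (Fin n →₀ ℕ) → ℂ) (z : Fin n → ℂ) : ℂ :=
  ∑ p ∈ J, a p * mpow z p.1 * conj (mpow z p.2)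

/-- Levi form `L(P; z, V) = ∑_{i,j} (∂²P/∂z_i∂z̄_j)(z) V_i conj(V_j)` of
`P(z) = ∑_{(α,β)∈J} a_{α,β} z^α z̄^β`, computed termwise via
`∂²(z^α z̄^β)/∂z_i∂z̄_j = α_i β_j z^{α-e_i} z̄^{β-e_j}`. -/
noncomputable def leviForm {n : ℕ} (J : Finset ((Fin n →₀ ℕ) × (Fin n →₀ ℕ)))
    (a : (Fin n →₀ ℕ) × (Fin n →₀ ℕ) → ℂ) (z V : Fin n → ℂ) : ℂ :=
  ∑ p ∈ J, a p * ∑ i, ∑ j,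
    (p.1 i : ℂ) * (p.2 j : ℂ) * mpow z (p.1 - Finsupp.single i 1) *
      conj (mpow z (p.2 - Finsupp.single j 1)) * V i * conj (V j)

/-!
Write `Q(z) = L(P; z, (c_1 z_1, …, c_n z_n))`. Since `∑_i α_i c_i z_i z^{α-e_i} = (∑_i α_i c_i) z^α`,
`Q` is again a polynomial in `z, z̄`, with coefficients `a_{α,β} (α·c) conj(β·c)`; it is real, and
its diagonal coefficients vanish by the choice of `c`. Averaging `Q` over the finite torus
`z ↦ (ω^{m_1} z_1, …, ω^{m_n} z_n)`, with `ω` a primitive `N`-th root of unity and `N` larger than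
every exponent, kills every off-diagonal monomial, so the average is `0`. Plurisubharmonicity makes
every term of the average nonnegative, hence all of them vanish, in particular `Q(z)` itself.
-/

section Monomials

variable {n : ℕ}

lemma mul_mpow_sub_single (z : Fin n → ℂ) (α : Fin n →₀ ℕ) {i : Fin n} (h : α i ≠ 0) :
    z i * mpow z (α - Finsupp.single i 1) = mpow z α := by
  unfold mpow
  rw [← mul_prod_erase univ _ (mem_univ i), ← mul_prod_erase univ (fun j => z j ^ α j) (mem_univ i),
    ← mul_assoc]
  congr 1
  · rw [Finsupp.tsub_apply, Finsupp.single_eq_same, ← pow_succ']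
    congr 1
    omega
  · refine prod_congr rfl fun j hj => ?_
    rw [Finsupp.tsub_apply, Finsupp.single_eq_of_ne' (ne_of_mem_erase hj).symm, tsub_zero]

lemma sum_mul_mul_mpow_sub_single (z c : Fin n → ℂ) (α : Fin n →₀ ℕ) :
    ∑ i, (α i : ℂ) * c i * (z i * mpow z (α - Finsupp.single i 1))
      = (∑ i, (α i : ℂ) * c i) * mpow z α := by
  rw [sum_mul]
  refine sum_congr rfl fun i _ => ?_
  by_cases h : α i = 0
  · simp [h]
  · rw [mul_mpow_sub_single z α h]

lemma mpow_pow_mul (ω : ℂ) (m : Fin n → ℕ) (z : Fin n → ℂ) (α : Fin n →₀ ℕ) :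
    mpow (fun j => ω ^ m j * z j) α = (∏ j, (ω ^ α j) ^ m j) * mpow z α := by
  unfold mpow
  rw [← prod_mul_distrib]
  exact prod_congr rfl fun j _ => by rw [mul_pow, pow_right_comm]

end Monomials

section Polynomials

variable {n : ℕ} (J : Finset ((Fin n →₀ ℕ) × (Fin n →₀ ℕ)))

lemma leviForm_mul_self (a : (Fin n →₀ ℕ) × (Fin n →₀ ℕ) → ℂ) (c z : Fin n → ℂ) :
    leviForm J a z (fun i => c i * z i)
      = pval J (fun p => a p * (∑ i, (p.1 i : ℂ) * c i) * conj (∑ j, (p.2 j : ℂ) * c j)) z := by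
  unfold leviForm pval
  refine sum_congr rfl fun p _ => ?_
  have hfactor : (∑ i, ∑ j, (p.1 i : ℂ) * (p.2 j : ℂ) * mpow z (p.1 - Finsupp.single i 1) *
      conj (mpow z (p.2 - Finsupp.single j 1)) * (c i * z i) * conj (c j * z j))
      = (∑ i, (p.1 i : ℂ) * c i * (z i * mpow z (p.1 - Finsupp.single i 1))) *
        conj (∑ j, (p.2 j : ℂ) * c j * (z j * mpow z (p.2 - Finsupp.single j 1))) := by
    rw [map_sum, sum_mul_sum]
    refine sum_congr rfl fun i _ => sum_congr rfl fun j _ => ?_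
    simp only [map_mul, Complex.conj_natCast]
    ring
  rw [hfactor, sum_mul_mul_mpow_sub_single, sum_mul_mul_mpow_sub_single, map_mul]
  ring

lemma conj_pval {b : (Fin n →₀ ℕ) × (Fin n →₀ ℕ) → ℂ} (hsym : ∀ p ∈ J, (p.2, p.1) ∈ J)
    (hherm : ∀ p, b (p.2, p.1) = conj (b p)) (z : Fin n → ℂ) :
    conj (pval J b z) = pval J b z := by
  unfold pval
  rw [map_sum]
  refine sum_nbij' (fun p => (p.2, p.1)) (fun p => (p.2, p.1)) hsym hsym (fun _ _ => rfl)
    (fun _ _ => rfl) fun p _ => ?_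
  rw [map_mul, map_mul, Complex.conj_conj, hherm p]
  ring

lemma pval_pow_mul (b : (Fin n →₀ ℕ) × (Fin n →₀ ℕ) → ℂ) (ω : ℂ) (m : Fin n → ℕ)
    (z : Fin n → ℂ) :
    pval J b (fun j => ω ^ m j * z j)
      = ∑ p ∈ J, b p * mpow z p.1 * conj (mpow z p.2) *
          ∏ j, (ω ^ p.1 j * conj ω ^ p.2 j) ^ m j := by
  unfold pval
  refine sum_congr rfl fun p _ => ?_
  simp only [mpow_pow_mul, map_mul, map_prod, map_pow, mul_pow, prod_mul_distrib]
  ring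

lemma exists_pos_forall_lt : ∃ N, 0 < N ∧ ∀ p ∈ J, ∀ j, p.1 j < N ∧ p.2 j < N := by
  refine ⟨∑ p ∈ J, ∑ j, (p.1 j + p.2 j) + 1, Nat.succ_pos _, fun p hp j => ?_⟩
  have hj : p.1 j + p.2 j ≤ ∑ j, (p.1 j + p.2 j) :=
    single_le_sum (f := fun j => p.1 j + p.2 j) (fun _ _ => Nat.zero_le _) (mem_univ j)
  have hp : ∑ j, (p.1 j + p.2 j) ≤ ∑ p ∈ J, ∑ j, (p.1 j + p.2 j) :=
    single_le_sum (f := fun p : (Fin n →₀ ℕ) × (Fin n →₀ ℕ) => ∑ j, (p.1 j + p.2 j))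
      (fun _ _ => Nat.zero_le _) hp
  omega

end Polynomials

lemma IsPrimitiveRoot.geom_sum_pow_mul_conj_pow_eq_zero {ω : ℂ} {N a b : ℕ}
    (hω : IsPrimitiveRoot ω N) (ha : a < N) (hb : b < N) (hab : a ≠ b) :
    ∑ t ∈ range N, (ω ^ a * conj ω ^ b) ^ t = 0 := by
  have hN : N ≠ 0 := by omega
  have hconj : conj ω = ω⁻¹ := (RCLike.inv_eq_conj (hω.norm'_eq_one hN)).symm
  have hne : ω ^ a * conj ω ^ b ≠ 1 := by
    rw [hconj, inv_pow, Ne, mul_inv_eq_one₀ (pow_ne_zero _ (hω.ne_zero hN))]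
    exact fun h => hab (hω.pow_inj ha hb h)
  have hpow : (ω ^ a * conj ω ^ b) ^ N = 1 := by
    rw [mul_pow, ← pow_mul, ← pow_mul, mul_comm a, mul_comm b, pow_mul, pow_mul, ← map_pow,
      hω.pow_eq_one, map_one, one_pow, one_pow, one_mul]
  rw [geom_sum_eq hne, hpow, sub_self, zero_div]

section Averaging

variable {n N : ℕ} {J : Finset ((Fin n →₀ ℕ) × (Fin n →₀ ℕ))}
  {b : (Fin n →₀ ℕ) × (Fin n →₀ ℕ) → ℂ}

/-- Orthogonality of characters of `(ℤ/N)^n`: only the diagonal monomials survive the average. -/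
lemma sum_pval_pow_mul_eq_zero {ω : ℂ} (hω : IsPrimitiveRoot ω N)
    (hlt : ∀ p ∈ J, ∀ j, p.1 j < N ∧ p.2 j < N) (hdiag : ∀ p ∈ J, p.1 = p.2 → b p = 0)
    (z : Fin n → ℂ) :
    ∑ m ∈ Fintype.piFinset (fun _ : Fin n => range N), pval J b (fun j => ω ^ m j * z j) = 0 := by
  simp only [pval_pow_mul]
  rw [sum_comm]
  refine sum_eq_zero fun p hp => ?_
  rw [← mul_sum, ← prod_univ_sum]
  by_cases hd : p.1 = p.2
  · rw [hdiag p hp hd]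
    ring
  · obtain ⟨j, hj⟩ : ∃ j, p.1 j ≠ p.2 j := by
      by_contra! h
      exact hd (Finsupp.ext h)
    rw [prod_eq_zero (mem_univ j)
      (hω.geom_sum_pow_mul_conj_pow_eq_zero (hlt p hp j).1 (hlt p hp j).2 hj), mul_zero]

lemma re_pval_eq_zero (hnonneg : ∀ w, 0 ≤ (pval J b w).re) (hdiag : ∀ p ∈ J, p.1 = p.2 → b p = 0)
    (z : Fin n → ℂ) : (pval J b z).re = 0 := by
  obtain ⟨N, hN, hlt⟩ := exists_pos_forall_lt J
  have hω := Complex.isPrimitiveRoot_exp N hN.ne'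
  have hsum := congrArg Complex.re (sum_pval_pow_mul_eq_zero hω hlt hdiag z)
  rw [Complex.re_sum, Complex.zero_re, sum_eq_zero_iff_of_nonneg fun m _ => hnonneg _] at hsum
  simpa using hsum (fun _ => 0) (by simp [Fintype.mem_piFinset, hN])

end Averaging

theorem stmt5_general {n : ℕ}
    (J : Finset ((Fin n →₀ ℕ) × (Fin n →₀ ℕ)))
    (a : (Fin n →₀ ℕ) × (Fin n →₀ ℕ) → ℂ)
    (hsym : ∀ p ∈ J, (p.2, p.1) ∈ J)
    (hherm : ∀ p : (Fin n →₀ ℕ) × (Fin n →₀ ℕ), a (p.2, p.1) = conj (a p))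
    (hpsh : ∀ z V : Fin n → ℂ, 0 ≤ (leviForm J a z V).re)
    (c : Fin n → ℂ)
    (hc : ∀ α : Fin n →₀ ℕ, (α, α) ∈ J → a (α, α) ≠ 0 → ∑ j, (α j : ℂ) * c j = 0) :
    ∀ z : Fin n → ℂ, leviForm J a z (fun i => c i * z i) = 0 := by
  intro z
  set b : (Fin n →₀ ℕ) × (Fin n →₀ ℕ) → ℂ :=
    fun p => a p * (∑ i, (p.1 i : ℂ) * c i) * conj (∑ j, (p.2 j : ℂ) * c j) with hb
  have hdiag : ∀ p ∈ J, p.1 = p.2 → b p = 0 := by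
    rintro ⟨α, β⟩ hp (h : α = β)
    subst h
    by_cases ha : a (α, α) = 0
    · simp [hb, ha]
    · simp [hb, hc α hp ha]
  have hbherm : ∀ p, b (p.2, p.1) = conj (b p) := fun p => by
    simp only [hb, hherm p, map_mul, Complex.conj_conj]
    ring
  rw [leviForm_mul_self]
  have hre := re_pval_eq_zero (fun w => leviForm_mul_self J a c w ▸ hpsh w _) hdiag z
  have him := Complex.conj_eq_iff_im.mp (conj_pval J hsym hbherm z)
  exact Complex.ext hre him

/-- let `P(z) = ∑_{(α,β)∈J} a_{α,β} z^α z̄^β` be a real-valued (Hermitian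
coefficients), plurisubharmonic polynomial, homogeneous of degree `2k`, without
pluriharmonic terms.  If `(c_1,…,c_n)` satisfies `∑_j α_j c_j = 0` for every `α` with
`|α| = k` and `a_{α,α} ≠ 0`, then `L(P; z, (c_1 z_1,…,c_n z_n)) = 0` for every `z`. -/
theorem stmt5 {n k : ℕ}
    (J : Finset ((Fin n →₀ ℕ) × (Fin n →₀ ℕ)))
    (a : (Fin n →₀ ℕ) × (Fin n →₀ ℕ) → ℂ)
    (hdeg : ∀ p ∈ J, (∑ i, p.1 i) + (∑ i, p.2 i) = 2 * k)
    (hnp : ∀ p ∈ J, p.1 ≠ 0 ∧ p.2 ≠ 0)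
    (hsym : ∀ p ∈ J, (p.2, p.1) ∈ J)
    (hherm : ∀ p : (Fin n →₀ ℕ) × (Fin n →₀ ℕ), a (p.2, p.1) = conj (a p))
    (hpsh : ∀ z V : Fin n → ℂ, 0 ≤ (leviForm J a z V).re)
    (c : Fin n → ℂ)
    (hc : ∀ α : Fin n →₀ ℕ, (α, α) ∈ J → a (α, α) ≠ 0 → ∑ j, (α j : ℂ) * c j = 0) :
    ∀ z : Fin n → ℂ, leviForm J a z (fun i => c i * z i) = 0 :=
  stmt5_general J a hsym hherm hpsh c hc
end

section
/- Let P: C^n → R be a plurisubharmonic polynomial homogeneous of degree 2k, without pluriharmonic terms, written P(z) = Σ_{β: 1≤|β|≤2k−1} z̄^β P_β(z) where each P_β is the homogeneous holomorphic polynomial of degree 2k−|β| collecting the coefficients a_{α,β}. Suppose G: C^n → C^m (1 ≤ m ≤ n−1) is holomorphic, nonsingular on a nonempty open set U, and P is pluriharmonic along every level set of G|_U. Then for every multi-index β with 1 ≤ |β| ≤ 2k−1, every point z ∈ U, and every vector K in the null space of the Jacobian G'(z), one has Σ_{J=1}^n K_J·(∂P_β/∂z_J)(z) = 0. -/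
open Finset
open scoped ComplexConjugate

/-!
Positive semidefiniteness of the complex Hessian `H(u)` turns the vanishing of the Levi form on
`ker G'(u)` into `H(u) K = 0` for `K ∈ ker G'(u)`; contracting with `ū` (Euler's relation in `z̄`)
gives `∑_β |β| ū^β ∂_K P_β(u) = 0`. Cramer's rule extends a kernel vector at `z₀` to a kernel
field `K(u)` of `G'` that is holomorphic along complex lines, so
`Ψ(u, v) = ∑_β |β| v^β ∂_{K(u)} P_β(u)` is holomorphic along complex lines and vanishes on
`{v = ū}` near `z₀`. A holomorphic function vanishing on a totally real piece vanishes
identically, so `v ↦ Ψ(z₀, v)` is the zero polynomial and each coefficient `|β| ∂_K P_β(z₀)`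
vanishes.
-/

open Metric Filter Topology Set Matrix Complex
open scoped ComplexOrder

section OneVariable

variable {E : Type*} [NormedAddCommGroup E] [NormedSpace ℂ E] [CompleteSpace E]

theorem Differentiable.eq_zero_of_eventually_ofReal {g : ℂ → E} (hg : Differentiable ℂ g)
    (h : ∀ᶠ x : ℝ in 𝓝 0, g x = 0) (z : ℂ) : g z = 0 := by
  have hofReal : Tendsto ((↑) : ℝ → ℂ) (𝓝[≠] 0) (𝓝[≠] 0) := by
    refine tendsto_nhdsWithin_iff.2 ⟨?_, ?_⟩
    · exact (continuous_ofReal.tendsto' 0 0 ofReal_zero).mono_left nhdsWithin_le_nhds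
    · filter_upwards [self_mem_nhdsWithin] with x hx using ofReal_ne_zero.2 hx
  have hfreq : ∃ᶠ w in 𝓝[≠] (0 : ℂ), g w = 0 :=
    hofReal.frequently (h.filter_mono nhdsWithin_le_nhds).frequently
  have han : AnalyticOnNhd ℂ g univ := fun w _ => hg.analyticAt w
  exact han.eqOn_zero_of_preconnected_of_frequently_eq_zero isPreconnected_univ (mem_univ 0) hfreq
    (mem_univ z)

/-- Schwarz's lemma applied twice, to `f` and then to `dslope f c`. -/
theorem norm_dslope_sub_deriv_le {f : ℂ → E} {c z : ℂ} {R M : ℝ}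
    (hd : DifferentiableOn ℂ f (ball c R)) (hf : ∀ w ∈ ball c R, ‖f w‖ ≤ M)
    (hz : z ∈ ball c R) :
    ‖dslope f c z - deriv f c‖ ≤ 4 * M / R ^ 2 * ‖z - c‖ := by
  have hc : c ∈ ball c R := mem_ball_self (pos_of_mem_ball hz)
  have hf_maps : MapsTo f (ball c R) (closedBall (f c) (2 * M)) := fun w hw => by
    rw [mem_closedBall, dist_eq_norm]
    linarith [norm_sub_le (f w) (f c), hf w hw, hf c hc]
  have hslope (w : ℂ) (hw : w ∈ ball c R) : ‖dslope f c w‖ ≤ 2 * M / R :=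
    Complex.norm_dslope_le_div_of_mapsTo_ball hd hf_maps hw
  have hd' : DifferentiableOn ℂ (dslope f c) (ball c R) :=
    (Complex.differentiableOn_dslope (isOpen_ball.mem_nhds hc)).2 hd
  have hslope_maps :
      MapsTo (dslope f c) (ball c R) (closedBall (dslope f c c) (2 * (2 * M / R))) := fun w hw => by
    rw [mem_closedBall, dist_eq_norm]
    linarith [norm_sub_le (dslope f c w) (dslope f c c), hslope w hw, hslope c hc]
  have := Complex.dist_le_div_mul_dist_of_mapsTo_ball hd' hslope_maps hz
  rw [dist_eq_norm, dist_eq_norm, dslope_same] at this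
  convert this using 2
  field_simp
  ring

end OneVariable

section Lines

variable {E : Type*} [NormedAddCommGroup E] [NormedSpace ℂ E] [CompleteSpace E]
variable {V : Type*} [NormedAddCommGroup V] [NormedSpace ℂ V]

/-- The difference quotients `t ↦ ζ⁻¹ (g (c + t d + ζ v) - g (c + t d))` are holomorphic and
converge locally uniformly as `ζ → 0`, by `norm_dslope_sub_deriv_le`. -/
theorem Differentiable.differentiable_fderiv_apply_line {g : V → E} (hg : Differentiable ℂ g)
    (c d v : V) : Differentiable ℂ fun t : ℂ => fderiv ℂ g (c + t • d) v := by
  let h (t ζ : ℂ) : E := g (c + t • d + ζ • v)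
  have hh (t : ℂ) : Differentiable ℂ (h t) := by fun_prop
  have hderiv (t : ℂ) : _root_.deriv (h t) 0 = fderiv ℂ g (c + t • d) v := by
    have hline : HasDerivAt (fun ζ : ℂ => c + t • d + ζ • v) v 0 := by
      simpa using ((hasDerivAt_id (0 : ℂ)).smul_const v).const_add (c + t • d)
    have := (hg _).hasFDerivAt.comp_hasDerivAt (0 : ℂ) hline
    rw [zero_smul, add_zero] at this
    exact this.deriv
  have hquot (ζ : ℂ) (hζ : ζ ≠ 0) : Differentiable ℂ fun t => dslope (h t) 0 ζ := by
    simp only [dslope_of_ne _ hζ, slope_def_module, h]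
    fun_prop
  have hlim : TendstoLocallyUniformlyOn (fun ζ t => dslope (h t) 0 ζ)
      (fun t => fderiv ℂ g (c + t • d) v) (𝓝[≠] 0) univ := by
    rw [tendstoLocallyUniformlyOn_iff_forall_isCompact isOpen_univ]
    intro K _ hK
    have := hg.continuous
    obtain ⟨M, hM⟩ := (hK.prod (isCompact_closedBall (0 : ℂ) 2)).exists_bound_of_continuousOn
      (f := fun p : ℂ × ℂ => g (c + p.1 • d + p.2 • v)) (by fun_prop)
    have hest (t : ℂ) (ht : t ∈ K) (ζ : ℂ) (hζ : ζ ∈ ball (0 : ℂ) 2) :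
        ‖dslope (h t) 0 ζ - fderiv ℂ g (c + t • d) v‖ ≤ M * ‖ζ‖ := by
      have hbound (w : ℂ) (hw : w ∈ ball (0 : ℂ) 2) : ‖h t w‖ ≤ M :=
        hM (t, w) ⟨ht, ball_subset_closedBall hw⟩
      have := norm_dslope_sub_deriv_le (hh t).differentiableOn hbound hζ
      rw [hderiv, sub_zero] at this
      convert this using 2
      norm_num
    rw [Metric.tendstoUniformlyOn_iff]
    intro ε hε
    have hδ : 0 < min 2 (ε / (|M| + 1)) := by positivity
    filter_upwards [nhdsWithin_le_nhds (ball_mem_nhds 0 hδ)] with ζ hζ t ht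
    rw [mem_ball_zero_iff, lt_min_iff, lt_div_iff₀ (by positivity)] at hζ
    rw [dist_comm, dist_eq_norm]
    calc _ ≤ M * ‖ζ‖ := hest t ht ζ (mem_ball_zero_iff.2 hζ.1)
      _ ≤ |M| * ‖ζ‖ := by gcongr; exact le_abs_self M
      _ < ε := by nlinarith [norm_nonneg ζ]
  rw [← differentiableOn_univ]
  exact hlim.differentiableOn
    (eventually_nhdsWithin_of_forall fun ζ hζ => (hquot ζ hζ).differentiableOn) isOpen_univ

end Lines

section Polarization

variable {V : Type*} [NormedAddCommGroup V] [NormedSpace ℂ V] [StarAddMonoid V] [StarModule ℂ V]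

/-- For `s, t` real, `z₀ + (s + i t) w` and `z̄₀ + (s - i t) w̄` are conjugate; continuing
holomorphically in `t` and then in `s` reaches `(s, t) = (1/2, i/2)`, i.e. the pair
`(z₀, z̄₀ + w̄)`. -/
theorem eq_zero_of_eventually_eq_zero_star {F : V × V → ℂ}
    (hF : ∀ c d : V × V, Differentiable ℂ fun t : ℂ => F (c + t • d)) {z₀ : V}
    (h : ∀ᶠ u in 𝓝 z₀, F (u, star u) = 0) (v : V) : F (z₀, v) = 0 := by
  set w := star v - z₀
  let Φ (s t : ℂ) : ℂ := F (z₀ + (s + I * t) • w, star z₀ + (s - I * t) • star w)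
  have hΦline (s : ℂ) : Differentiable ℂ (Φ s) := by
    convert hF (z₀ + s • w, star z₀ + s • star w) (I • w, -I • star w) using 2 with t
    simp only [Φ, Prod.smul_mk, Prod.mk_add_mk, add_smul, smul_smul, neg_smul, smul_neg,
      add_assoc, sub_eq_add_neg, mul_comm t]
  have hreal : ∀ᶠ p : ℝ × ℝ in 𝓝 (0, 0), Φ p.1 p.2 = 0 := by
    have hcont : Continuous fun p : ℝ × ℝ => z₀ + ((p.1 : ℂ) + I * p.2) • w := by fun_prop
    have hlim : Tendsto (fun p : ℝ × ℝ => z₀ + ((p.1 : ℂ) + I * p.2) • w) (𝓝 (0, 0)) (𝓝 z₀) :=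
      hcont.tendsto' _ _ (by simp)
    filter_upwards [hlim.eventually h] with p hp
    convert hp using 3
    simp [star_add, star_smul, w, Complex.conj_ofReal, sub_eq_add_neg]
  have hdiag : ∀ᶠ s : ℝ in 𝓝 0, F (z₀, star z₀ + (2 * (s : ℂ)) • star w) = 0 := by
    rw [nhds_prod_eq] at hreal
    filter_upwards [hreal.curry] with s hs
    have h1 : (s : ℂ) + I * (I * s) = 0 := by linear_combination (s : ℂ) * I_mul_I
    have h2 : (s : ℂ) - I * (I * s) = 2 * s := by linear_combination -(s : ℂ) * I_mul_I
    simpa only [Φ, h1, h2, zero_smul, add_zero] using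
      (hΦline s).eq_zero_of_eventually_ofReal hs (I * s)
  have hline : Differentiable ℂ fun σ : ℂ => F (z₀, star z₀ + (2 * σ) • star w) := by
    convert hF (z₀, star z₀) (0, (2 : ℂ) • star w) using 2 with σ
    simp [smul_smul, mul_comm σ]
  simpa [w] using hline.eq_zero_of_eventually_ofReal hdiag (1 / 2)

end Polarization

section KernelField

lemma Matrix.differentiable_det {ι : Type*} [Fintype ι] [DecidableEq ι] {M : ℂ → Matrix ι ι ℂ}
    (hM : ∀ i j, Differentiable ℂ fun t => M t i j) : Differentiable ℂ fun t => (M t).det := by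
  simp only [det_apply, Units.smul_def, zsmul_eq_mul]
  fun_prop

lemma Matrix.differentiable_cramer {ι : Type*} [Fintype ι] [DecidableEq ι] {M : ℂ → Matrix ι ι ℂ}
    {b : ℂ → ι → ℂ} (hM : ∀ i j, Differentiable ℂ fun t => M t i j)
    (hb : ∀ i, Differentiable ℂ fun t => b t i) (i : ι) :
    Differentiable ℂ fun t => cramer (M t) (b t) i := by
  simp only [cramer_apply]
  refine differentiable_det fun k l => ?_
  by_cases hl : l = i
  · simpa [hl] using hb k
  · simpa [hl] using hM k l

theorem exists_differentiable_ker_fderiv {n m : ℕ} {G : (Fin n → ℂ) → (Fin m → ℂ)}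
    (hG : Differentiable ℂ G) {z₀ : Fin n → ℂ} (hsurj : Function.Surjective (fderiv ℂ G z₀))
    {K₀ : Fin n → ℂ} (hK₀ : fderiv ℂ G z₀ K₀ = 0) :
    ∃ K : (Fin n → ℂ) → (Fin n → ℂ), K z₀ = K₀ ∧ (∀ u, fderiv ℂ G u (K u) = 0) ∧
      ∀ c d, Differentiable ℂ fun t : ℂ => K (c + t • d) := by
  let A (u : Fin n → ℂ) : Matrix (Fin m) (Fin n) ℂ :=
    LinearMap.toMatrix' (fderiv ℂ G u : (Fin n → ℂ) →ₗ[ℂ] (Fin m → ℂ))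
  have hA (u x : Fin n → ℂ) : A u *ᵥ x = fderiv ℂ G u x := LinearMap.toMatrix'_mulVec _ x
  have hAline (c d : Fin n → ℂ) (b : Fin m) (i : Fin n) :
      Differentiable ℂ fun t : ℂ => A (c + t • d) b i := by
    simpa [A, LinearMap.toMatrix'_apply] using differentiable_pi.1
      (hG.differentiable_fderiv_apply_line c d (Pi.single i 1)) b
  obtain ⟨ρ, hρ⟩ := (fderiv ℂ G z₀ : (Fin n → ℂ) →ₗ[ℂ] (Fin m → ℂ))
    |>.exists_rightInverse_of_surjective (LinearMap.range_eq_top.2 hsurj)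
  let C := LinearMap.toMatrix' ρ
  have hAC : A z₀ * C = 1 := by
    simp only [A, C, ← LinearMap.toMatrix'_comp, hρ, LinearMap.toMatrix'_id]
  clear_value A C
  -- `A u *ᵥ K u = det (A u * C) • A u *ᵥ K₀ - (A u * C) *ᵥ cramer (A u * C) (A u *ᵥ K₀) = 0`.
  let K (u : Fin n → ℂ) : Fin n → ℂ :=
    (A u * C).det • K₀ - C *ᵥ cramer (A u * C) (A u *ᵥ K₀)
  refine ⟨K, ?_, fun u => ?_, fun c d => ?_⟩
  · simp [K, hAC, hA, hK₀]
  · rw [← hA]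
    simp only [K, mulVec_sub, mulVec_smul, mulVec_mulVec, mulVec_cramer, sub_self]
  · have hACline (b b' : Fin m) : Differentiable ℂ fun t : ℂ => (A (c + t • d) * C) b b' := by
      simp only [mul_apply]
      exact .fun_sum fun j _ => (hAline c d b j).mul_const _
    refine differentiable_pi.2 fun i => ?_
    simp only [K, Pi.sub_apply, Pi.smul_apply, smul_eq_mul, mulVec, dotProduct]
    have hcramer := differentiable_cramer hACline (b := fun t => A (c + t • d) *ᵥ K₀) fun b => by
      simp only [mulVec, dotProduct]
      exact .fun_sum fun j _ => (hAline c d b j).mul_const _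
    have hdet := differentiable_det hACline
    fun_prop

end KernelField
section Monomials

variable {n : ℕ}

lemma mpow_add (z : Fin n → ℂ) (α β : Fin n →₀ ℕ) : mpow z (α + β) = mpow z α * mpow z β := by
  simp only [mpow, Finsupp.add_apply, pow_add, prod_mul_distrib]

lemma mpow_single (z : Fin n → ℂ) (i : Fin n) : mpow z (Finsupp.single i 1) = z i := by
  simp [mpow, Finsupp.single_apply, pow_ite]

lemma conj_mpow (z : Fin n → ℂ) (α : Fin n →₀ ℕ) : conj (mpow z α) = mpow (star z) α := by
  simp [mpow, map_prod]

@[fun_prop]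
lemma differentiable_mpow (α : Fin n →₀ ℕ) : Differentiable ℂ fun z : Fin n → ℂ => mpow z α := by
  unfold mpow
  fun_prop

lemma natCast_mul_mpow_sub_single_mul (z : Fin n → ℂ) (α : Fin n →₀ ℕ) (i : Fin n) :
    (α i : ℂ) * (mpow z (α - Finsupp.single i 1) * z i) = α i * mpow z α := by
  rcases Nat.eq_zero_or_pos (α i) with hi | hi
  · simp [hi]
  · rw [← mpow_single z i, ← mpow_add, tsub_add_cancel_of_le (Finsupp.single_le_iff.2 hi)]

noncomputable def mpowDeriv (z V : Fin n → ℂ) (α : Fin n →₀ ℕ) : ℂ :=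
  ∑ i, V i * α i * mpow z (α - Finsupp.single i 1)

lemma mpowDeriv_self (z : Fin n → ℂ) (α : Fin n →₀ ℕ) :
    mpowDeriv z z α = (∑ i, α i : ℕ) * mpow z α := by
  simp only [mpowDeriv, Nat.cast_sum, sum_mul]
  refine sum_congr rfl fun i _ => ?_
  rw [← natCast_mul_mpow_sub_single_mul]
  ring

lemma sum_filter_eq_zero_of_forall_sum_mpow_eq_zero {ι : Type*} (s : Finset ι)
    (e : ι → Fin n →₀ ℕ) (c : ι → ℂ) (h : ∀ v, ∑ i ∈ s, c i * mpow v (e i) = 0)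
    (γ : Fin n →₀ ℕ) : ∑ i ∈ s with e i = γ, c i = 0 := by
  classical
  set P : MvPolynomial (Fin n) ℂ := ∑ i ∈ s, MvPolynomial.monomial (e i) (c i)
  have hP : P = 0 := MvPolynomial.funext fun v => by
    simpa [P, MvPolynomial.eval_monomial, Finsupp.prod_pow, mpow] using h v
  simpa [P, MvPolynomial.coeff_sum, MvPolynomial.coeff_monomial, sum_filter] using
    congrArg (MvPolynomial.coeff γ) hP

end Monomials

section Hessian

variable {n : ℕ} (J : Finset ((Fin n →₀ ℕ) × (Fin n →₀ ℕ))) (a : (Fin n →₀ ℕ) × (Fin n →₀ ℕ) → ℂ)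

/-- The complex Hessian, `hessian J a z k l = ∂²P/∂z̄_k∂z_l (z)`. -/
noncomputable def hessian (z : Fin n → ℂ) : Matrix (Fin n) (Fin n) ℂ :=
  Matrix.of fun k l => ∑ p ∈ J, a p * (p.2 k * conj (mpow z (p.2 - Finsupp.single k 1))) *
    (p.1 l * mpow z (p.1 - Finsupp.single l 1))

lemma star_dotProduct_hessian_mulVec (z V W : Fin n → ℂ) :
    star W ⬝ᵥ (hessian J a z *ᵥ V) =
      ∑ p ∈ J, a p * conj (mpowDeriv z W p.2) * mpowDeriv z V p.1 := by
  simp only [dotProduct, mulVec, hessian, of_apply, mpowDeriv, map_sum, map_mul, map_natCast,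
    Pi.star_apply, RCLike.star_def, mul_sum, sum_mul]
  rw [sum_comm]
  conv_rhs => rw [sum_comm]; enter [2, l]; rw [sum_comm]
  exact sum_congr rfl fun l _ => sum_congr rfl fun k _ => sum_congr rfl fun p _ => by ring

lemma leviForm_eq_star_dotProduct_hessian_mulVec (z V : Fin n → ℂ) :
    leviForm J a z V = star V ⬝ᵥ (hessian J a z *ᵥ V) := by
  simp only [star_dotProduct_hessian_mulVec, leviForm, mpowDeriv, map_sum, map_mul, map_natCast,
    mul_sum, sum_mul]
  refine sum_congr rfl fun p _ => sum_congr rfl fun i _ => sum_congr rfl fun j _ => by ring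

lemma hessian_isHermitian (hsym : ∀ p ∈ J, (p.2, p.1) ∈ J)
    (hherm : ∀ p : (Fin n →₀ ℕ) × (Fin n →₀ ℕ), a (p.2, p.1) = conj (a p)) (z : Fin n → ℂ) :
    (hessian J a z).IsHermitian := by
  ext k l
  simp only [conjTranspose_apply, hessian, of_apply, star_sum, RCLike.star_def, map_mul,
    map_natCast, Complex.conj_conj]
  refine sum_nbij' Prod.swap Prod.swap hsym hsym
    (fun _ _ => rfl) (fun _ _ => rfl) fun p _ => ?_
  rw [← hherm]
  simp only [Prod.swap]
  ring

lemma hessian_posSemidef (hsym : ∀ p ∈ J, (p.2, p.1) ∈ J)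
    (hherm : ∀ p : (Fin n →₀ ℕ) × (Fin n →₀ ℕ), a (p.2, p.1) = conj (a p))
    (hpsh : ∀ z V : Fin n → ℂ, 0 ≤ (leviForm J a z V).re) (z : Fin n → ℂ) :
    (hessian J a z).PosSemidef := by
  have hH := hessian_isHermitian J a hsym hherm z
  refine .of_dotProduct_mulVec_nonneg hH fun V => Complex.nonneg_iff.2 ⟨?_, ?_⟩
  · simpa [leviForm_eq_star_dotProduct_hessian_mulVec] using hpsh z V
  · exact (hH.im_star_dotProduct_mulVec_self V).symm

/-- `∑_β |β| w^β ∂_V P_β(z)`; at `w = z̄` it is `∑_k z̄_k (H(z) V)_k` (Euler's relation in `z̄`). -/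
noncomputable def eulerLevi (w z V : Fin n → ℂ) : ℂ :=
  ∑ p ∈ J, a p * (∑ i, p.2 i : ℕ) * mpowDeriv z V p.1 * mpow w p.2

lemma eulerLevi_star_eq_zero (hsym : ∀ p ∈ J, (p.2, p.1) ∈ J)
    (hherm : ∀ p : (Fin n →₀ ℕ) × (Fin n →₀ ℕ), a (p.2, p.1) = conj (a p))
    (hpsh : ∀ z V : Fin n → ℂ, 0 ≤ (leviForm J a z V).re) {z V : Fin n → ℂ}
    (hV : leviForm J a z V = 0) : eulerLevi J a (star z) z V = 0 := by
  have hker : hessian J a z *ᵥ V = 0 :=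
    ((hessian_posSemidef J a hsym hherm hpsh z).dotProduct_mulVec_zero_iff V).1
      (leviForm_eq_star_dotProduct_hessian_mulVec J a z V ▸ hV)
  have := star_dotProduct_hessian_mulVec J a z V z
  rw [hker, dotProduct_zero] at this
  rw [eulerLevi, this]
  refine sum_congr rfl fun p _ => ?_
  rw [mpowDeriv_self, map_mul, map_natCast, conj_mpow]
  ring

lemma differentiable_eulerLevi {w z V : ℂ → Fin n → ℂ} (hw : Differentiable ℂ w)
    (hz : Differentiable ℂ z) (hV : Differentiable ℂ V) :
    Differentiable ℂ fun t => eulerLevi J a (w t) (z t) (V t) := by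
  have hVi := differentiable_pi.1 hV
  unfold eulerLevi mpowDeriv
  fun_prop

end Hessian

theorem stmt10_general {n m k : ℕ}
    (J : Finset ((Fin n →₀ ℕ) × (Fin n →₀ ℕ)))
    (a : (Fin n →₀ ℕ) × (Fin n →₀ ℕ) → ℂ)
    (hsym : ∀ p ∈ J, (p.2, p.1) ∈ J)
    (hherm : ∀ p : (Fin n →₀ ℕ) × (Fin n →₀ ℕ), a (p.2, p.1) = conj (a p))
    (hpsh : ∀ z V : Fin n → ℂ, 0 ≤ (leviForm J a z V).re)
    (G : (Fin n → ℂ) → (Fin m → ℂ)) (hG : Differentiable ℂ G)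
    (U : Set (Fin n → ℂ)) (hUo : IsOpen U)
    (hns : ∀ z ∈ U, Function.Surjective (fderiv ℂ G z))
    (hph : ∀ z ∈ U, ∀ V : Fin n → ℂ, fderiv ℂ G z V = 0 → leviForm J a z V = 0) :
    ∀ β : Fin n →₀ ℕ, 1 ≤ ∑ i, β i → ∑ i, β i ≤ 2 * k - 1 →
      ∀ z ∈ U, ∀ K : Fin n → ℂ, fderiv ℂ G z K = 0 →
        ∑ p ∈ J.filter (fun p => p.2 = β), a p *
          ∑ i, K i * (p.1 i : ℂ) * mpow z (p.1 - Finsupp.single i 1) = 0 := by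
  intro β hβ _ z₀ hz₀ K₀ hK₀
  obtain ⟨K, hKz₀, hKker, hKline⟩ := exists_differentiable_ker_fderiv hG (hns z₀ hz₀) hK₀
  have hΨ (v : Fin n → ℂ) : eulerLevi J a v z₀ K₀ = 0 := by
    rw [← hKz₀]
    refine eq_zero_of_eventually_eq_zero_star (F := fun x => eulerLevi J a x.2 x.1 (K x.1))
      (fun c d => ?_) ?_ v
    · exact differentiable_eulerLevi J a (by fun_prop) (by fun_prop) (hKline c.1 d.1)
    · filter_upwards [hUo.mem_nhds hz₀] with u hu
      exact eulerLevi_star_eq_zero J a hsym hherm hpsh (hph u hu _ (hKker u))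
  have hcoeff := sum_filter_eq_zero_of_forall_sum_mpow_eq_zero J Prod.snd _ hΨ β
  have hβ_mul : ((∑ i, β i : ℕ) : ℂ) * ∑ p ∈ J with p.2 = β, a p * mpowDeriv z₀ K₀ p.1 = 0 := by
    rw [mul_sum, ← hcoeff]
    refine sum_congr rfl fun p hp => ?_
    rw [(mem_filter.1 hp).2]
    ring
  exact (mul_eq_zero.1 hβ_mul).resolve_left (Nat.cast_ne_zero.2 (by omega))

/-- with `P(z) = ∑_{β} z̄^β P_β(z)` a plurisubharmonic polynomial,
homogeneous of degree `2k`, without pluriharmonic terms, and `G : ℂⁿ → ℂᵐ`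
(`1 ≤ m ≤ n−1`) holomorphic, nonsingular on a nonempty open `U`, with `P` pluriharmonic
along every level set of `G|_U`: for every `β` with `1 ≤ |β| ≤ 2k−1`, every `z ∈ U` and
every `K` in the kernel of the Jacobian `G'(z)`, one has `∑_J K_J ∂P_β/∂z_J(z) = 0`. -/
theorem stmt10 {n m k : ℕ} (hm1 : 1 ≤ m) (hmn : m ≤ n - 1)
    (J : Finset ((Fin n →₀ ℕ) × (Fin n →₀ ℕ)))
    (a : (Fin n →₀ ℕ) × (Fin n →₀ ℕ) → ℂ)
    (hdeg : ∀ p ∈ J, (∑ i, p.1 i) + (∑ i, p.2 i) = 2 * k)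
    (hnp : ∀ p ∈ J, p.1 ≠ 0 ∧ p.2 ≠ 0)
    (hsym : ∀ p ∈ J, (p.2, p.1) ∈ J)
    (hherm : ∀ p : (Fin n →₀ ℕ) × (Fin n →₀ ℕ), a (p.2, p.1) = conj (a p))
    (hpsh : ∀ z V : Fin n → ℂ, 0 ≤ (leviForm J a z V).re)
    (G : (Fin n → ℂ) → (Fin m → ℂ)) (hG : Differentiable ℂ G)
    (U : Set (Fin n → ℂ)) (hUo : IsOpen U) (hUne : U.Nonempty)
    (hns : ∀ z ∈ U, Function.Surjective (fderiv ℂ G z))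
    (hph : ∀ z ∈ U, ∀ V : Fin n → ℂ, fderiv ℂ G z V = 0 → leviForm J a z V = 0) :
    ∀ β : Fin n →₀ ℕ, 1 ≤ ∑ i, β i → ∑ i, β i ≤ 2 * k - 1 →
      ∀ z ∈ U, ∀ K : Fin n → ℂ, fderiv ℂ G z K = 0 →
        ∑ p ∈ J.filter (fun p => p.2 = β), a p *
          ∑ i, K i * (p.1 i : ℂ) * mpow z (p.1 - Finsupp.single i 1) = 0 :=
  stmt10_general J a hsym hherm hpsh G hG U hUo hns hph
end

section
/- Let P: C^n → R, n ≥ 2, be a non-constant homogeneous plurisubharmonic polynomial without pluriharmonic terms, homogeneous of degree 2d_j in the pair (z_j, z̄_j) for each j = 1,...,n, with d_j ∈ Z_{>0}. Let d = gcd(d_1,...,d_n). Then there exists a homogeneous subharmonic polynomial s: C → R without harmonic terms such that P(z_1,...,z_n) = s(z_1^{d_1/d}···z_n^{d_n/d}) for all (z_1,...,z_n) ∈ C^n. -/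
open Finset
open scoped ComplexConjugate

/-!
Along the directions `V = μ * z` the Levi form becomes
`∑ a_{αβ} z^α z̄^β ⟨α, μ⟩ conj ⟨β, μ⟩`, a real, nonnegative trigonometric polynomial on the torus
`|z_j| = 1`. When `⟨d, μ⟩ = 0` its mean (the coefficient of the diagonal monomial `α = β = d`)
vanishes, so the polynomial vanishes identically, and so does each of its Fourier coefficients
`-a_{αβ} |⟨α, μ⟩|²` (using `β = 2d - α`). Hence every exponent `α` with `a_{αβ} ≠ 0` is
orthogonal to `d^⊥`, i.e. `α = k • m` and `β = l • m` with `m = d / gcd d`, so `P(z) = s(z^m)`.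
In the Euler direction `V = z` the Levi form of `P` equals `|∑ m_j|² |τ|² ∂_τ ∂_τ̄ s(τ)` at
`τ = z^m`, which gives subharmonicity off `0`, and at `0` by continuity.

The Fourier analysis is done on the finite torus of `N`-th roots of unity with `N > 4 max d_j`,
where distinct exponents have distinct characters.
-/

theorem AddChar.map_sum_eq_prod {A M ι : Type*} [AddCommMonoid A] [CommMonoid M]
    (ψ : AddChar A M) (s : Finset ι) (f : ι → A) : ψ (∑ i ∈ s, f i) = ∏ i ∈ s, ψ (f i) := by
  rw [← toAdd_ofAdd (∑ i ∈ s, f i), ofAdd_sum, ← AddChar.toMonoidHom_apply, map_prod]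
  rfl

namespace PlurisubharmonicPolynomial

open Complex

variable {n : ℕ}

lemma mpow_add (z : Fin n → ℂ) (α β : Fin n →₀ ℕ) :
    mpow z (α + β) = mpow z α * mpow z β := by
  simp only [mpow, Finsupp.coe_add, Pi.add_apply, pow_add, prod_mul_distrib]

lemma mpow_single (z : Fin n → ℂ) (i : Fin n) (k : ℕ) :
    mpow z (Finsupp.single i k) = z i ^ k := by
  rw [mpow, Fintype.prod_eq_single i fun j hj => by simp [Finsupp.single_eq_of_ne hj]]
  simp

lemma mpow_nsmul (z : Fin n → ℂ) (k : ℕ) (α : Fin n →₀ ℕ) :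
    mpow z (k • α) = mpow z α ^ k := by
  simp only [mpow, Finsupp.coe_smul, Pi.smul_apply, smul_eq_mul, ← prod_pow, ← pow_mul,
    mul_comm k]

lemma natCast_mul_mpow_tsub_single_mul (z : Fin n → ℂ) (α : Fin n →₀ ℕ) (i : Fin n) :
    (α i : ℂ) * (mpow z (α - Finsupp.single i 1) * z i) = α i * mpow z α := by
  rcases Nat.eq_zero_or_pos (α i) with h | h
  · simp [h]
  · have hle : Finsupp.single i 1 ≤ α := Finsupp.single_le_iff.mpr h
    rw [← pow_one (z i), ← mpow_single, ← mpow_add, tsub_add_cancel_of_le hle]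

lemma leviForm_mul_self (J : Finset ((Fin n →₀ ℕ) × (Fin n →₀ ℕ)))
    (a : (Fin n →₀ ℕ) × (Fin n →₀ ℕ) → ℂ) (z μ : Fin n → ℂ) :
    leviForm J a z (μ * z) = ∑ p ∈ J, a p * (mpow z p.1 * conj (mpow z p.2)) *
      ((∑ i, (p.1 i : ℂ) * μ i) * conj (∑ i, (p.2 i : ℂ) * μ i)) := by
  refine sum_congr rfl fun p _ => ?_
  have hsplit : ∀ α : Fin n →₀ ℕ, ∀ i, (α i : ℂ) * mpow z (α - Finsupp.single i 1) * (μ i * z i)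
      = (α i : ℂ) * μ i * mpow z α := fun α i => by
    linear_combination μ i * natCast_mul_mpow_tsub_single_mul z α i
  calc a p * ∑ i, ∑ j, (p.1 i : ℂ) * (p.2 j : ℂ) * mpow z (p.1 - Finsupp.single i 1) *
        conj (mpow z (p.2 - Finsupp.single j 1)) * (μ * z) i * conj ((μ * z) j)
      = a p * ((∑ i, (p.1 i : ℂ) * mpow z (p.1 - Finsupp.single i 1) * (μ i * z i)) *
          conj (∑ j, (p.2 j : ℂ) * mpow z (p.2 - Finsupp.single j 1) * (μ j * z j))) := by
        simp only [map_sum, sum_mul_sum, map_mul, map_natCast, Pi.mul_apply]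
        exact congrArg _ (sum_congr rfl fun i _ => sum_congr rfl fun j _ => by ring)
    _ = _ := by
        simp only [hsplit, ← sum_mul, map_mul]
        ring

lemma conj_sum_of_swap_mem {α : Type*} (s : Finset (α × α)) (hs : ∀ p ∈ s, p.swap ∈ s)
    (F : α × α → ℂ) (hF : ∀ p ∈ s, conj (F p) = F p.swap) :
    conj (∑ p ∈ s, F p) = ∑ p ∈ s, F p := by
  rw [map_sum]
  exact sum_nbij' Prod.swap Prod.swap hs hs (fun p _ => rfl) (fun p _ => rfl) hF

variable {J : Finset ((Fin n →₀ ℕ) × (Fin n →₀ ℕ))} {a : (Fin n →₀ ℕ) × (Fin n →₀ ℕ) → ℂ}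

lemma conj_pval (hsym : ∀ p ∈ J, (p.2, p.1) ∈ J)
    (hherm : ∀ p : (Fin n →₀ ℕ) × (Fin n →₀ ℕ), a (p.2, p.1) = conj (a p)) (z : Fin n → ℂ) :
    conj (pval J a z) = pval J a z :=
  conj_sum_of_swap_mem J hsym _ fun p _ => by
    simp only [Prod.swap, hherm p, map_mul, conj_conj]
    ring

lemma conj_leviForm (hsym : ∀ p ∈ J, (p.2, p.1) ∈ J)
    (hherm : ∀ p : (Fin n →₀ ℕ) × (Fin n →₀ ℕ), a (p.2, p.1) = conj (a p)) (z V : Fin n → ℂ) :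
    conj (leviForm J a z V) = leviForm J a z V := by
  refine conj_sum_of_swap_mem J hsym _ fun p _ => ?_
  simp only [Prod.swap, hherm p, map_mul, map_sum, map_natCast, conj_conj]
  rw [Finset.sum_comm]
  exact congrArg _ (sum_congr rfl fun i _ => sum_congr rfl fun j _ => by ring)

def frequency (N : ℕ) (p : (Fin n →₀ ℕ) × (Fin n →₀ ℕ)) : Fin n → ZMod N :=
  fun j => (p.1 j : ZMod N) - (p.2 j : ZMod N)

lemma eq_of_natCast_sub_eq {N D x y x' y' : ℕ} (hN : 4 * D < N) (h : x + y = 2 * D)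
    (h' : x' + y' = 2 * D) (hxy : (x : ZMod N) - y = x' - y') : x = x' := by
  have hdvd : (N : ℤ) ∣ (x : ℤ) - y - (x' - y') :=
    (ZMod.intCast_zmod_eq_zero_iff_dvd _ N).mp (by push_cast; rw [hxy, sub_self])
  have := Int.eq_zero_of_abs_lt_dvd hdvd (abs_lt.mpr ⟨by omega, by omega⟩)
  omega

variable {d : Fin n → ℕ}

lemma injOn_frequency {N : ℕ} (hsep : ∀ p ∈ J, ∀ j : Fin n, p.1 j + p.2 j = 2 * d j)
    (hN : ∀ j, 4 * d j < N) : Set.InjOn (frequency (n := n) N) J := fun p hp q hq h => by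
  have h1 : ∀ j, p.1 j = q.1 j := fun j =>
    eq_of_natCast_sub_eq (hN j) (hsep p hp j) (hsep q hq j) (congrFun h j)
  refine Prod.ext (Finsupp.ext h1) (Finsupp.ext fun j => ?_)
  have := hsep p hp j; have := hsep q hq j; have := h1 j
  omega

lemma fst_apply_eq_of_frequency_eq_zero {N : ℕ}
    (hsep : ∀ p ∈ J, ∀ j : Fin n, p.1 j + p.2 j = 2 * d j) (hN : ∀ j, 4 * d j < N)
    {p : (Fin n →₀ ℕ) × (Fin n →₀ ℕ)} (hp : p ∈ J) (h : frequency N p = 0) (j : Fin n) :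
    p.1 j = d j :=
  eq_of_natCast_sub_eq (hN j) (hsep p hp j) (two_mul _).symm
    (by rw [sub_self]; exact congrFun h j)

section Torus

variable {N : ℕ} [NeZero N]

lemma sum_stdAddChar_dotProduct (ξ : Fin n → ZMod N) :
    ∑ t : Fin n → ZMod N, ZMod.stdAddChar (ξ ⬝ᵥ t) = if ξ = 0 then (N : ℂ) ^ n else 0 := by
  classical
  let χ : AddChar (Fin n → ZMod N) ℂ :=
    ZMod.stdAddChar.compAddMonoidHom (AddMonoidHom.mk' (ξ ⬝ᵥ ·) (dotProduct_add ξ))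
  have hχ : χ = 0 ↔ ξ = 0 := by
    refine ⟨fun h => funext fun j => ZMod.injective_stdAddChar ?_, fun h => ?_⟩
    · simpa [χ] using AddChar.eq_zero_iff.mp h (Pi.single j 1)
    · ext t
      simp [χ, h]
  simpa [χ, hχ] using AddChar.sum_eq_ite χ

noncomputable def trigPoly {ι : Type*} (J : Finset ι) (G : ι → ℂ) (ξ : ι → Fin n → ZMod N)
    (t : Fin n → ZMod N) : ℂ :=
  ∑ p ∈ J, G p * ZMod.stdAddChar (ξ p ⬝ᵥ t)

lemma sum_trigPoly_mul_stdAddChar_neg {ι : Type*} [DecidableEq (Fin n → ZMod N)]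
    (J : Finset ι) (G : ι → ℂ) (ξ : ι → Fin n → ZMod N) (η : Fin n → ZMod N) :
    ∑ t, trigPoly J G ξ t * ZMod.stdAddChar (-(η ⬝ᵥ t)) = N ^ n * ∑ p ∈ J with ξ p = η, G p := by
  simp_rw [trigPoly, sum_mul, mul_assoc, ← AddChar.map_add_eq_mul, ← sub_eq_add_neg,
    ← sub_dotProduct]
  rw [Finset.sum_comm]
  simp_rw [← mul_sum, sum_stdAddChar_dotProduct, sub_eq_zero, mul_ite, mul_zero, sum_ite,
    sum_const_zero, add_zero, mul_sum, mul_comm]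

lemma eq_zero_of_trigPoly_re_nonneg {ι : Type*} {J : Finset ι} {G : ι → ℂ}
    {ξ : ι → Fin n → ZMod N} (hξ : Set.InjOn ξ J) (hzero : ∀ p ∈ J, ξ p = 0 → G p = 0)
    (hreal : ∀ t, conj (trigPoly J G ξ t) = trigPoly J G ξ t)
    (hnonneg : ∀ t, 0 ≤ (trigPoly J G ξ t).re) {p : ι} (hp : p ∈ J) : G p = 0 := by
  classical
  have hmean : ∑ t, trigPoly J G ξ t = 0 := by
    simpa [sum_eq_zero fun q hq => hzero q (mem_filter.mp hq).1 (mem_filter.mp hq).2] using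
      sum_trigPoly_mul_stdAddChar_neg J G ξ 0
  have hre : ∀ t, (trigPoly J G ξ t).re = 0 := by
    have := congrArg re hmean
    rw [re_sum, zero_re] at this
    exact fun t => (sum_eq_zero_iff_of_nonneg fun t _ => hnonneg t).mp this t (mem_univ t)
  have hf : ∀ t, trigPoly J G ξ t = 0 := fun t => by
    rw [← conj_eq_iff_re.mp (hreal t), hre t, ofReal_zero]
  have hfilter : ∑ q ∈ J with ξ q = ξ p, G q = G p :=
    sum_eq_single_of_mem p (mem_filter.mpr ⟨hp, rfl⟩) fun q hq hqp =>
      absurd (hξ (mem_filter.mp hq).1 hp (mem_filter.mp hq).2) hqp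
  have := sum_trigPoly_mul_stdAddChar_neg J G ξ (ξ p)
  simp only [hf, zero_mul, sum_const_zero, hfilter] at this
  exact (mul_eq_zero.mp this.symm).resolve_left (pow_ne_zero _ (NeZero.ne _))

noncomputable def torusPoint (t : Fin n → ZMod N) : Fin n → ℂ :=
  fun j => ZMod.stdAddChar (t j)

lemma mpow_torusPoint (t : Fin n → ZMod N) (α : Fin n →₀ ℕ) :
    mpow (torusPoint t) α = ZMod.stdAddChar ((fun j => (α j : ZMod N)) ⬝ᵥ t) := by
  simp only [mpow, torusPoint, dotProduct, AddChar.map_sum_eq_prod, ← nsmul_eq_mul,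
    AddChar.map_nsmul_eq_pow]

lemma mpow_torusPoint_mul_conj (t : Fin n → ZMod N) (p : (Fin n →₀ ℕ) × (Fin n →₀ ℕ)) :
    mpow (torusPoint t) p.1 * conj (mpow (torusPoint t) p.2) =
      ZMod.stdAddChar (frequency N p ⬝ᵥ t) := by
  rw [mpow_torusPoint, mpow_torusPoint, ← AddChar.map_neg_eq_conj, ← AddChar.map_add_eq_mul,
    ← sub_eq_add_neg, ← sub_dotProduct]
  rfl

lemma leviForm_torusPoint (J : Finset ((Fin n →₀ ℕ) × (Fin n →₀ ℕ)))
    (a : (Fin n →₀ ℕ) × (Fin n →₀ ℕ) → ℂ) (μ : Fin n → ℂ) (t : Fin n → ZMod N) :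
    leviForm J a (torusPoint t) (μ * torusPoint t) =
      trigPoly J (fun p => a p * ((∑ i, (p.1 i : ℂ) * μ i) * conj (∑ i, (p.2 i : ℂ) * μ i)))
        (frequency N) t := by
  rw [leviForm_mul_self, trigPoly]
  refine sum_congr rfl fun p _ => ?_
  rw [mpow_torusPoint_mul_conj]
  ring

end Torus

theorem dotProduct_exponent_eq_zero (hsep : ∀ p ∈ J, ∀ j : Fin n, p.1 j + p.2 j = 2 * d j)
    (hsym : ∀ p ∈ J, (p.2, p.1) ∈ J)
    (hherm : ∀ p : (Fin n →₀ ℕ) × (Fin n →₀ ℕ), a (p.2, p.1) = conj (a p))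
    (hpsh : ∀ z V : Fin n → ℂ, 0 ≤ (leviForm J a z V).re)
    {μ : Fin n → ℂ} (hμ : ∑ i, (d i : ℂ) * μ i = 0)
    {p : (Fin n →₀ ℕ) × (Fin n →₀ ℕ)} (hp : p ∈ J) (ha : a p ≠ 0) :
    ∑ i, (p.1 i : ℂ) * μ i = 0 := by
  set N := 4 * ∑ j, d j + 1
  have hN : ∀ j, 4 * d j < N := fun j => by
    have := single_le_sum (fun j _ => Nat.zero_le (d j)) (mem_univ j)
    omega
  let A : (Fin n →₀ ℕ) → ℂ := fun α => ∑ i, (α i : ℂ) * μ i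
  have hA : ∀ q ∈ J, A q.2 = -A q.1 := fun q hq => by
    have hq2 : ∀ i, (q.2 i : ℂ) = 2 * d i - q.1 i := fun i => by
      rw [eq_sub_iff_add_eq', ← Nat.cast_add, hsep q hq i]; push_cast; ring
    simp only [A, hq2, sub_mul, sum_sub_distrib, mul_assoc, ← mul_sum, hμ, mul_zero, zero_sub]
  have hzero : ∀ q ∈ J, frequency N q = 0 → a q * (A q.1 * conj (A q.2)) = 0 := fun q hq h => by
    simp [A, fst_apply_eq_of_frequency_eq_zero hsep hN hq h, hμ]
  have hG := eq_zero_of_trigPoly_re_nonneg (injOn_frequency hsep hN) hzero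
    (fun t => leviForm_torusPoint J a μ t ▸ conj_leviForm hsym hherm _ _)
    (fun t => leviForm_torusPoint J a μ t ▸ hpsh _ _) hp
  rw [hA p hp, map_neg, mul_neg, mul_conj, mul_neg, neg_eq_zero, mul_eq_zero, ofReal_eq_zero,
    normSq_eq_zero] at hG
  exact hG.resolve_left ha

theorem exponent_mul_eq_mul (hsep : ∀ p ∈ J, ∀ j : Fin n, p.1 j + p.2 j = 2 * d j)
    (hsym : ∀ p ∈ J, (p.2, p.1) ∈ J)
    (hherm : ∀ p : (Fin n →₀ ℕ) × (Fin n →₀ ℕ), a (p.2, p.1) = conj (a p))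
    (hpsh : ∀ z V : Fin n → ℂ, 0 ≤ (leviForm J a z V).re)
    {p : (Fin n →₀ ℕ) × (Fin n →₀ ℕ)} (hp : p ∈ J) (ha : a p ≠ 0) (j k : Fin n) :
    p.1 j * d k = p.1 k * d j := by
  let μ : Fin n → ℂ := Pi.single j (d k : ℂ) - Pi.single k (d j : ℂ)
  have hsum : ∀ x : Fin n → ℕ, ∑ i, (x i : ℂ) * μ i = x j * d k - x k * d j := fun x => by
    change (fun i => (x i : ℂ)) ⬝ᵥ μ = _
    rw [dotProduct_sub, dotProduct_single, dotProduct_single]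
  have := dotProduct_exponent_eq_zero hsep hsym hherm hpsh
    (by rw [hsum d]; ring) hp ha
  rw [hsum p.1, sub_eq_zero] at this
  exact_mod_cast this

lemma mul_gcd_eq_gcd_mul_of_mul_eq_mul {ι : Type*} {s : Finset ι} {x y : ι → ℕ} {j : ι}
    (h : ∀ k ∈ s, x j * y k = x k * y j) : x j * s.gcd y = s.gcd x * y j := by
  have hl := Finset.gcd_mul_left (s := s) (f := y) (a := x j)
  have hr := Finset.gcd_mul_right (s := s) (f := x) (a := y j)
  rw [normalize_eq] at hl hr
  rw [← hl, ← hr]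
  exact Finset.gcd_congr rfl h

theorem exponent_eq_gcd_mul (hsep : ∀ p ∈ J, ∀ j : Fin n, p.1 j + p.2 j = 2 * d j)
    (hsym : ∀ p ∈ J, (p.2, p.1) ∈ J)
    (hherm : ∀ p : (Fin n →₀ ℕ) × (Fin n →₀ ℕ), a (p.2, p.1) = conj (a p))
    (hpsh : ∀ z V : Fin n → ℂ, 0 ≤ (leviForm J a z V).re)
    {p : (Fin n →₀ ℕ) × (Fin n →₀ ℕ)} (hp : p ∈ J) (ha : a p ≠ 0) (j : Fin n) :
    p.1 j = univ.gcd p.1 * (d j / univ.gcd d) := by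
  have h := mul_gcd_eq_gcd_mul_of_mul_eq_mul (s := univ) (j := j)
    fun k _ => exponent_mul_eq_mul hsep hsym hherm hpsh hp ha j k
  obtain ⟨m, hm⟩ : univ.gcd d ∣ d j := Finset.gcd_dvd (mem_univ j)
  rcases Nat.eq_zero_or_pos (univ.gcd d) with h0 | hpos
  · have := hsep p hp j
    simp only [h0, zero_mul] at hm
    simp only [hm, Nat.zero_div, mul_zero]
    omega
  · rw [hm, Nat.mul_div_cancel_left m hpos]
    rw [hm] at h
    exact Nat.eq_of_mul_eq_mul_right hpos (by linarith)

def ExponentsAreMultiplesOf (J : Finset ((Fin n →₀ ℕ) × (Fin n →₀ ℕ)))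
    (a : (Fin n →₀ ℕ) × (Fin n →₀ ℕ) → ℂ) (M : Fin n →₀ ℕ) : Prop :=
  ∀ p ∈ J, a p ≠ 0 → p.1 = univ.gcd p.1 • M ∧ p.2 = univ.gcd p.2 • M

noncomputable def reducedExponent (d : Fin n → ℕ) : Fin n →₀ ℕ :=
  Finsupp.equivFunOnFinite.symm fun j => d j / univ.gcd d

theorem exponentsAreMultiplesOf_reducedExponent
    (hsep : ∀ p ∈ J, ∀ j : Fin n, p.1 j + p.2 j = 2 * d j)
    (hsym : ∀ p ∈ J, (p.2, p.1) ∈ J)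
    (hherm : ∀ p : (Fin n →₀ ℕ) × (Fin n →₀ ℕ), a (p.2, p.1) = conj (a p))
    (hpsh : ∀ z V : Fin n → ℂ, 0 ≤ (leviForm J a z V).re) :
    ExponentsAreMultiplesOf J a (reducedExponent d) := fun p hp ha => by
  have ha' : a (p.2, p.1) ≠ 0 := by rwa [hherm, map_ne_zero]
  exact ⟨Finsupp.ext (exponent_eq_gcd_mul hsep hsym hherm hpsh hp ha),
    Finsupp.ext (exponent_eq_gcd_mul hsep hsym hherm hpsh (hsym p hp) ha')⟩

open scoped Classical in
/-- If `(α, β) = (k • M, l • M)` with `gcd M = 1`, then `(k, l) = (gcd α, gcd β)`. -/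
noncomputable def reducedSupport (J : Finset ((Fin n →₀ ℕ) × (Fin n →₀ ℕ)))
    (a : (Fin n →₀ ℕ) × (Fin n →₀ ℕ) → ℂ) : Finset (ℕ × ℕ) :=
  {p ∈ J | a p ≠ 0}.image fun p => (univ.gcd p.1, univ.gcd p.2)

noncomputable def reducedCoeff (a : (Fin n →₀ ℕ) × (Fin n →₀ ℕ) → ℂ) (M : Fin n →₀ ℕ)
    (q : ℕ × ℕ) : ℂ :=
  a (q.1 • M, q.2 • M)

variable {M : Fin n →₀ ℕ}

lemma sum_eq_sum_reducedSupport
    (hfac : ExponentsAreMultiplesOf J a M)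
    (Φ : ℕ × ℕ → ℂ) :
    ∑ p ∈ J, a p * Φ (univ.gcd p.1, univ.gcd p.2) =
      ∑ q ∈ reducedSupport J a, reducedCoeff a M q * Φ q := by
  classical
  have hp : ∀ p ∈ {p ∈ J | a p ≠ 0}, p = (univ.gcd p.1 • M, univ.gcd p.2 • M) := fun p hp => by
    obtain ⟨hpJ, ha⟩ := mem_filter.mp hp
    exact Prod.ext (hfac p hpJ ha).1 (hfac p hpJ ha).2
  rw [reducedSupport, sum_image fun p hp' q hq' h => by
    rw [hp p hp', hp q hq', (Prod.mk.inj h).1, (Prod.mk.inj h).2]]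
  rw [← sum_filter_of_ne fun p _ h => left_ne_zero_of_mul h]
  exact sum_congr rfl fun p hp' => by rw [reducedCoeff, ← hp p hp']

lemma pval_eq_sum_reducedSupport
    (hfac : ExponentsAreMultiplesOf J a M)
    (z : Fin n → ℂ) :
    pval J a z = ∑ q ∈ reducedSupport J a,
      reducedCoeff a M q * mpow z M ^ q.1 * conj (mpow z M) ^ q.2 := by
  simp_rw [mul_assoc]
  rw [← sum_eq_sum_reducedSupport hfac, pval]
  refine sum_congr rfl fun p hp => ?_
  rcases eq_or_ne (a p) 0 with ha | ha
  · simp [ha]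
  · rw [mul_assoc]
    conv_lhs => rw [(hfac p hp ha).1, (hfac p hp ha).2]
    rw [mpow_nsmul, mpow_nsmul, map_pow]

lemma leviForm_eq_sum_reducedSupport
    (hfac : ExponentsAreMultiplesOf J a M)
    (z : Fin n → ℂ) :
    leviForm J a z z = ((∑ i, M i : ℕ) : ℂ) ^ 2 * ∑ q ∈ reducedSupport J a,
      reducedCoeff a M q * q.1 * q.2 * mpow z M ^ q.1 * conj (mpow z M) ^ q.2 := by
  have hdeg : ∀ k : ℕ, ∑ i, ((k • M) i : ℂ) = k * ((∑ i, M i : ℕ) : ℂ) := fun k => by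
    simp [mul_sum]
  let τ := mpow z M
  have hlevi := leviForm_mul_self J a z 1
  simp only [one_mul, Pi.one_apply, mul_one] at hlevi
  calc leviForm J a z z
      = ∑ p ∈ J, a p * (((∑ i, M i : ℕ) : ℂ) ^ 2 * (univ.gcd p.1 : ℕ) * (univ.gcd p.2 : ℕ) *
          τ ^ univ.gcd p.1 * conj τ ^ univ.gcd p.2) := by
        rw [hlevi]
        refine sum_congr rfl fun p hp => ?_
        rcases eq_or_ne (a p) 0 with ha | ha
        · simp [ha]
        · conv_lhs => rw [(hfac p hp ha).1, (hfac p hp ha).2]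
          rw [mpow_nsmul, mpow_nsmul, hdeg, hdeg, map_mul, map_pow, map_natCast, map_natCast]
          ring
    _ = _ := by
        rw [sum_eq_sum_reducedSupport hfac (fun q => ((∑ i, M i : ℕ) : ℂ) ^ 2 * q.1 * q.2 *
          τ ^ q.1 * conj τ ^ q.2), mul_sum]
        exact sum_congr rfl fun q _ => by ring

lemma reducedSupport_bidegree
    (hfac : ExponentsAreMultiplesOf J a M)
    {D : ℕ} (hsep : ∀ p ∈ J, ∀ j : Fin n, p.1 j + p.2 j = 2 * (D * M j))
    (hnp : ∀ p ∈ J, p.1 ≠ 0 ∧ p.2 ≠ 0) :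
    ∀ q ∈ reducedSupport J a, 1 ≤ q.1 ∧ 1 ≤ q.2 ∧ q.1 + q.2 = 2 * D := by
  intro q hq
  obtain ⟨p, hp, rfl⟩ := mem_image.mp hq
  obtain ⟨hpJ, ha⟩ := mem_filter.mp hp
  have hgcd : ∀ α : Fin n →₀ ℕ, α ≠ 0 → 1 ≤ univ.gcd α := fun α hα =>
    Nat.one_le_iff_ne_zero.mpr fun h =>
      hα (Finsupp.ext fun j => gcd_eq_zero_iff.mp h j (mem_univ j))
  obtain ⟨j, hj⟩ := Finsupp.ne_iff.mp (hnp p hpJ).1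
  have hMj : 0 < M j := by
    rw [(hfac p hpJ ha).1] at hj
    exact Nat.pos_of_ne_zero (right_ne_zero_of_mul hj)
  have hdeg := hsep p hpJ j
  rw [(hfac p hpJ ha).1, (hfac p hpJ ha).2] at hdeg
  simp only [Finsupp.smul_apply, smul_eq_mul, ← add_mul, ← mul_assoc] at hdeg
  exact ⟨hgcd _ (hnp p hpJ).1, hgcd _ (hnp p hpJ).2, Nat.eq_of_mul_eq_mul_right hMj hdeg⟩

lemma sum_apply_pos (hM : M ≠ 0) : 0 < ∑ i, M i :=
  Nat.pos_of_ne_zero fun h => hM (Finsupp.ext fun i => sum_eq_zero_iff.mp h i (mem_univ i))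

lemma exists_mpow_eq (hM : M ≠ 0) (τ : ℂ) : ∃ z : Fin n → ℂ, mpow z M = τ := by
  obtain ⟨w, hw⟩ := IsAlgClosed.exists_pow_nat_eq τ (sum_apply_pos hM)
  exact ⟨fun _ => w, by rw [mpow, prod_pow_eq_pow_sum, hw]⟩

lemma re_nonneg_of_re_nonneg_of_ne_zero {f : ℂ → ℂ} (hf : Continuous f)
    (h : ∀ τ ≠ 0, 0 ≤ (f τ).re) (τ : ℂ) : 0 ≤ (f τ).re := by
  have hclosed : IsClosed {τ | 0 ≤ (f τ).re} := isClosed_le continuous_const (continuous_re.comp hf)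
  exact hclosed.closure_subset_iff.mpr h ((dense_compl_singleton (0 : ℂ)).closure_eq ▸ trivial)

theorem laplacian_re_nonneg
    (hfac : ExponentsAreMultiplesOf J a M)
    (hpsh : ∀ z V : Fin n → ℂ, 0 ≤ (leviForm J a z V).re) (hM : M ≠ 0)
    (hS : ∀ q ∈ reducedSupport J a, 1 ≤ q.1 ∧ 1 ≤ q.2) (τ : ℂ) :
    0 ≤ (∑ q ∈ reducedSupport J a,
      reducedCoeff a M q * q.1 * q.2 * τ ^ (q.1 - 1) * conj τ ^ (q.2 - 1)).re := by
  let L : ℂ → ℂ := fun τ => ∑ q ∈ reducedSupport J a,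
    reducedCoeff a M q * q.1 * q.2 * τ ^ (q.1 - 1) * conj τ ^ (q.2 - 1)
  refine re_nonneg_of_re_nonneg_of_ne_zero (f := L) (by fun_prop) (fun τ hτ => ?_) τ
  obtain ⟨z, rfl⟩ := exists_mpow_eq hM τ
  have hfactor : ∀ q ∈ reducedSupport J a,
      reducedCoeff a M q * q.1 * q.2 * mpow z M ^ q.1 * conj (mpow z M) ^ q.2 =
        mpow z M * conj (mpow z M) *
          (reducedCoeff a M q * q.1 * q.2 * mpow z M ^ (q.1 - 1) * conj (mpow z M) ^ (q.2 - 1)) :=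
    fun q hq => by
      rw [← mul_pow_sub_one (Nat.one_le_iff_ne_zero.mp (hS q hq).1),
        ← mul_pow_sub_one (Nat.one_le_iff_ne_zero.mp (hS q hq).2)]
      ring
  have hlevi := hpsh z z
  rw [leviForm_eq_sum_reducedSupport hfac, sum_congr rfl hfactor, ← mul_sum, mul_conj,
    ← mul_assoc, ← ofReal_natCast, ← ofReal_pow, ← ofReal_mul, re_ofReal_mul] at hlevi
  have hdeg : (0 : ℝ) < (∑ i, M i : ℕ) := by exact_mod_cast sum_apply_pos hM
  exact nonneg_of_mul_nonneg_right hlevi (mul_pos (pow_pos hdeg 2) (normSq_pos.mpr hτ))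

end PlurisubharmonicPolynomial

open PlurisubharmonicPolynomial

theorem stmt12_general {n : ℕ} (hn : 2 ≤ n)
    (J : Finset ((Fin n →₀ ℕ) × (Fin n →₀ ℕ)))
    (a : (Fin n →₀ ℕ) × (Fin n →₀ ℕ) → ℂ)
    (d : Fin n → ℕ) (hd : ∀ j, 0 < d j)
    (hsep : ∀ p ∈ J, ∀ j : Fin n, p.1 j + p.2 j = 2 * d j)
    (hnp : ∀ p ∈ J, p.1 ≠ 0 ∧ p.2 ≠ 0)
    (hsym : ∀ p ∈ J, (p.2, p.1) ∈ J)
    (hherm : ∀ p : (Fin n →₀ ℕ) × (Fin n →₀ ℕ), a (p.2, p.1) = conj (a p))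
    (hpsh : ∀ z V : Fin n → ℂ, 0 ≤ (leviForm J a z V).re)
    (dG : ℕ) (hdG : dG = Finset.univ.gcd d) :
    ∃ (S : Finset (ℕ × ℕ)) (c : ℕ × ℕ → ℂ) (ds : ℕ),
      (∀ p ∈ S, 1 ≤ p.1 ∧ 1 ≤ p.2 ∧ p.1 + p.2 = ds) ∧
      (∀ τ : ℂ, (∑ p ∈ S, c p * τ ^ p.1 * conj τ ^ p.2).im = 0) ∧
      (∀ τ : ℂ,
        0 ≤ (∑ p ∈ S, c p * (p.1 : ℂ) * (p.2 : ℂ) * τ ^ (p.1 - 1) * conj τ ^ (p.2 - 1)).re) ∧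
      ∀ z : Fin n → ℂ, pval J a z =
        ∑ p ∈ S, c p * (∏ j, z j ^ (d j / dG)) ^ p.1 * conj (∏ j, z j ^ (d j / dG)) ^ p.2 := by
  subst hdG
  have hfac := exponentsAreMultiplesOf_reducedExponent hsep hsym hherm hpsh
  have hdM : ∀ j, d j = univ.gcd d * reducedExponent d j := fun j =>
    (Nat.mul_div_cancel' (gcd_dvd (mem_univ j))).symm
  have hM : reducedExponent d ≠ 0 := fun h =>
    (hd ⟨0, by omega⟩).ne' (by rw [hdM, h, Finsupp.zero_apply, mul_zero])
  have hS := reducedSupport_bidegree hfac (fun p hp j => hdM j ▸ hsep p hp j) hnp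
  refine ⟨reducedSupport J a, reducedCoeff a (reducedExponent d), 2 * univ.gcd d, hS,
    fun τ => ?_, laplacian_re_nonneg hfac hpsh hM fun q hq => ⟨(hS q hq).1, (hS q hq).2.1⟩,
    pval_eq_sum_reducedSupport hfac⟩
  obtain ⟨z, rfl⟩ := exists_mpow_eq hM τ
  rw [← pval_eq_sum_reducedSupport hfac, ← Complex.conj_eq_iff_im]
  exact conj_pval hsym hherm z

/-- let `P : ℂⁿ → ℝ` (`n ≥ 2`) be a non-constant homogeneous
plurisubharmonic polynomial without pluriharmonic terms, homogeneous of degree `2d_j > 0`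
in `(z_j, z̄_j)` for every `j`, and let `d = gcd(d_1,…,d_n)`.  Then there is a homogeneous
subharmonic polynomial `s : ℂ → ℝ` without harmonic terms such that
`P(z) = s(z_1^{d_1/d} ⋯ z_n^{d_n/d})`. -/
theorem stmt12 {n : ℕ} (hn : 2 ≤ n)
    (J : Finset ((Fin n →₀ ℕ) × (Fin n →₀ ℕ)))
    (a : (Fin n →₀ ℕ) × (Fin n →₀ ℕ) → ℂ)
    (d : Fin n → ℕ) (hd : ∀ j, 0 < d j)
    (hsep : ∀ p ∈ J, ∀ j : Fin n, p.1 j + p.2 j = 2 * d j)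
    (hnp : ∀ p ∈ J, p.1 ≠ 0 ∧ p.2 ≠ 0)
    (hsym : ∀ p ∈ J, (p.2, p.1) ∈ J)
    (hherm : ∀ p : (Fin n →₀ ℕ) × (Fin n →₀ ℕ), a (p.2, p.1) = conj (a p))
    (hpsh : ∀ z V : Fin n → ℂ, 0 ≤ (leviForm J a z V).re)
    (hnc : ∃ z w : Fin n → ℂ, pval J a z ≠ pval J a w)
    (dG : ℕ) (hdG : dG = Finset.univ.gcd d) :
    ∃ (S : Finset (ℕ × ℕ)) (c : ℕ × ℕ → ℂ) (ds : ℕ),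
      (∀ p ∈ S, 1 ≤ p.1 ∧ 1 ≤ p.2 ∧ p.1 + p.2 = ds) ∧
      (∀ τ : ℂ, (∑ p ∈ S, c p * τ ^ p.1 * conj τ ^ p.2).im = 0) ∧
      (∀ τ : ℂ,
        0 ≤ (∑ p ∈ S, c p * (p.1 : ℂ) * (p.2 : ℂ) * τ ^ (p.1 - 1) * conj τ ^ (p.2 - 1)).re) ∧
      ∀ z : Fin n → ℂ, pval J a z =
        ∑ p ∈ S, c p * (∏ j, z j ^ (d j / dG)) ^ p.1 * conj (∏ j, z j ^ (d j / dG)) ^ p.2 :=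
  stmt12_general hn J a d hd hsep hnp hsym hherm hpsh dG hdG
end

section
/- Let G: C^n → C^{n−l} be defined by G(z) = z_1^{d_1}···z_l^{d_l}·(z_{l+1}^{k−D},...,z_n^{k−D}) with d_1,...,d_l, k−D positive integers. For z with all coordinates nonzero, the vectors C_j(z) with entries (k−D)z_j in position j, −d_j z_{l+1},...,−d_j z_n in positions l+1,...,n, and 0 elsewhere, for j = 1,...,l, form a basis of the kernel of the Jacobian matrix G'(z) ∈ C^{(n−l)×n}. -/
open Finset

/-!
Each component `G_i(z) = z^{α_i}`, `α_i = (d, e·δ_i)`, is a monomial, so at a point with nonzero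
coordinates its logarithmic derivative is `dG_i(z) v = G_i(z) · ∑_w α_{i,w} v_w / z_w`. Hence `v`
lies in the kernel iff `∑_j d_j v_j / z_j + e v_{l+i} / z_{l+i} = 0` for every `i`. Every `C_j`
satisfies these equations, and they determine a kernel vector from its first `l` coordinates.
Since the first `l` coordinates of `C_1, …, C_l` are the nonzero multiples `e z_j` of the standard
basis vectors, the `C_j` are independent and span the kernel.
-/

theorem Submodule.span_range_eq_of_disjoint_ker {R M N ι : Type*} [Ring R] [AddCommGroup M]
    [Module R M] [AddCommGroup N] [Module R N] {p : Submodule R M} {C : ι → M}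
    (f : M →ₗ[R] N) (hC : ∀ j, C j ∈ p) (hd : Disjoint p (LinearMap.ker f))
    (hspan : p.map f ≤ span R (Set.range (f ∘ C))) :
    span R (Set.range C) = p := by
  have hle : span R (Set.range C) ≤ p := span_le.2 (Set.range_subset_iff.2 hC)
  refine le_antisymm hle fun v hv => ?_
  obtain ⟨u, hu, huv⟩ : f v ∈ (span R (Set.range C)).map f := by
    rw [map_span, ← Set.range_comp]
    exact hspan (mem_map_of_mem hv)
  rwa [← LinearMap.disjoint_ker_iff_injOn.mp hd (hle hu) hv huv]

theorem hasFDerivAt_prod_pow {𝕜 ι : Type*} [NontriviallyNormedField 𝕜] [Fintype ι]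
    (c : ι → ℕ) {z : ι → 𝕜} (hz : ∀ w, z w ≠ 0) :
    HasFDerivAt (fun x : ι → 𝕜 => ∏ w, x w ^ c w)
      ((∏ w, z w ^ c w) • ∑ w, ((c w : 𝕜) / z w) •
        (ContinuousLinearMap.proj w : (ι → 𝕜) →L[𝕜] 𝕜)) z := by
  classical
  refine (HasFDerivAt.finsetProd (u := univ) (g := fun w (x : ι → 𝕜) => x w ^ c w) fun w _ =>
    (hasDerivAt_pow (c w) (z w)).comp_hasFDerivAt z (hasFDerivAt_apply w z)).congr_fderiv ?_
  rw [smul_sum]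
  refine sum_congr rfl fun w _ => ?_
  rw [smul_smul, smul_smul]
  congr 1
  cases hk : c w with
  | zero => simp
  | succ k =>
    rw [← prod_erase_mul univ _ (mem_univ w), hk]
    field_simp [hz w]
    push_cast
    ring

section

variable {l m : ℕ} (d : Fin l → ℕ) (e : ℕ)

def expVec (i : Fin m) : Fin (l + m) → ℕ := Fin.addCases d (Pi.single i e)

def monomialMap (x : Fin (l + m) → ℂ) (i : Fin m) : ℂ := ∏ w, x w ^ expVec d e i w

theorem prod_pow_expVec (x : Fin (l + m) → ℂ) (i : Fin m) :
    ∏ w, x w ^ expVec d e i w = (∏ j, x (Fin.castAdd m j) ^ d j) * x (Fin.natAdd l i) ^ e := by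
  simp [expVec, Fin.prod_univ_add, Pi.single_apply]

theorem sum_expVec_mul (y : Fin (l + m) → ℂ) (i : Fin m) :
    ∑ w, (expVec d e i w : ℂ) * y w =
      ∑ j, (d j : ℂ) * y (Fin.castAdd m j) + e * y (Fin.natAdd l i) := by
  simp [expVec, Fin.sum_univ_add, Pi.single_apply]

theorem fderiv_monomialMap_apply {z : Fin (l + m) → ℂ} (hz : ∀ w, z w ≠ 0)
    (y : Fin (l + m) → ℂ) (i : Fin m) :
    fderiv ℂ (monomialMap d e) z y i =
      monomialMap d e z i * ∑ w, (expVec d e i w : ℂ) * (y w / z w) := by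
  have hG : HasFDerivAt (monomialMap d e) _ z :=
    hasFDerivAt_pi.2 fun i => hasFDerivAt_prod_pow (expVec d e i) hz
  simp [hG.fderiv, monomialMap, div_mul_eq_mul_div, mul_div_assoc]

theorem mem_ker_fderiv_monomialMap_iff {z : Fin (l + m) → ℂ} (hz : ∀ w, z w ≠ 0)
    (y : Fin (l + m) → ℂ) :
    y ∈ LinearMap.ker (fderiv ℂ (monomialMap d e) z).toLinearMap ↔
      ∀ i, ∑ w, (expVec d e i w : ℂ) * (y w / z w) = 0 := by
  have hG : ∀ i, monomialMap d e z i ≠ 0 := fun i =>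
    prod_ne_zero_iff.2 fun w _ => pow_ne_zero _ (hz w)
  simp only [LinearMap.mem_ker, ContinuousLinearMap.coe_coe, funext_iff, Pi.zero_apply,
    fderiv_monomialMap_apply d e hz, mul_eq_zero, hG, false_or]

def kernelVec (z : Fin (l + m) → ℂ) (j : Fin l) : Fin (l + m) → ℂ := fun i => Fin.addCases
  (fun j' : Fin l => if j' = j then (e : ℂ) * z (Fin.castAdd m j) else 0)
  (fun i' : Fin m => -(d j : ℂ) * z (Fin.natAdd l i')) i

variable {d e} {z : Fin (l + m) → ℂ}

theorem kernelVec_mem_ker (hz : ∀ w, z w ≠ 0) (j : Fin l) :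
    kernelVec d e z j ∈ LinearMap.ker (fderiv ℂ (monomialMap d e) z).toLinearMap := by
  rw [mem_ker_fderiv_monomialMap_iff d e hz]
  intro i
  rw [sum_expVec_mul, Fintype.sum_eq_single j fun j' hj' => by simp [kernelVec, hj']]
  simp only [kernelVec, Fin.addCases_left, Fin.addCases_right, if_true]
  field_simp [hz]
  ring

theorem funLeft_castAdd_comp_kernelVec (hw : ∀ j, IsUnit ((e : ℂ) * z (Fin.castAdd m j))) :
    LinearMap.funLeft ℂ ℂ (Fin.castAdd m) ∘ kernelVec d e z =
      (Pi.basisFun ℂ (Fin l)).isUnitSMul hw := by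
  ext j j'
  simp [kernelVec, Module.Basis.isUnitSMul_apply, Pi.single_apply, eq_comm]

theorem disjoint_ker_fderiv_monomialMap_ker_funLeft (he : e ≠ 0) (hz : ∀ w, z w ≠ 0) :
    Disjoint (LinearMap.ker (fderiv ℂ (monomialMap d e) z).toLinearMap)
      (LinearMap.ker (LinearMap.funLeft ℂ ℂ (Fin.castAdd m))) := by
  rw [Submodule.disjoint_def]
  intro y hy hy0
  rw [mem_ker_fderiv_monomialMap_iff d e hz] at hy
  have hleft : ∀ j, y (Fin.castAdd m j) = 0 := fun j => congrFun hy0 j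
  funext w
  induction w using Fin.addCases with
  | left j => exact hleft j
  | right i => simpa [sum_expVec_mul, hleft, he, hz] using hy i

end

theorem stmt15_general {l m : ℕ} (d : Fin l → ℕ) (e : ℕ) (he : 0 < e)
    (G : (Fin (l + m) → ℂ) → (Fin m → ℂ))
    (hGdef : ∀ z i, G z i = (∏ j, z (Fin.castAdd m j) ^ d j) * z (Fin.natAdd l i) ^ e)
    (z : Fin (l + m) → ℂ) (hz : ∀ i, z i ≠ 0)
    (Cvec : Fin l → Fin (l + m) → ℂ)
    (hC : ∀ j, Cvec j = fun i => Fin.addCases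
      (fun j' : Fin l => if j' = j then (e : ℂ) * z (Fin.castAdd m j) else 0)
      (fun i' : Fin m => -(d j : ℂ) * z (Fin.natAdd l i')) i) :
    LinearIndependent ℂ Cvec ∧
    Submodule.span ℂ (Set.range Cvec) = LinearMap.ker (fderiv ℂ G z).toLinearMap := by
  obtain rfl : G = monomialMap d e :=
    funext₂ fun x i => (hGdef x i).trans (prod_pow_expVec d e x i).symm
  obtain rfl : Cvec = kernelVec d e z := funext hC
  have hw : ∀ j, IsUnit ((e : ℂ) * z (Fin.castAdd m j)) := fun j =>
    (mul_ne_zero (Nat.cast_ne_zero.2 he.ne') (hz _)).isUnit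
  have hπ := funLeft_castAdd_comp_kernelVec (d := d) hw
  refine ⟨.of_comp _ (hπ ▸ Module.Basis.linearIndependent _), ?_⟩
  refine Submodule.span_range_eq_of_disjoint_ker _ (kernelVec_mem_ker hz)
    (disjoint_ker_fderiv_monomialMap_ker_funLeft he.ne' hz) ?_
  rw [hπ, Module.Basis.span_eq]
  exact le_top

/-- for `G(z) = z_1^{d_1}⋯z_l^{d_l}·(z_{l+1}^e,…,z_n^e)` (`e = k−D > 0`,
`d_j > 0`, `n = l + m`) and `z` with all coordinates nonzero, the vectors `C_j`
(`j = 1,…,l`) with entry `e·z_j` in position `j`, entries `−d_j z_{l+1},…,−d_j z_n` in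
positions `l+1,…,n`, and `0` elsewhere, form a basis of the kernel of the Jacobian
`G'(z)`. -/
theorem stmt15 {l m : ℕ} (d : Fin l → ℕ) (hd : ∀ j, 0 < d j) (e : ℕ) (he : 0 < e)
    (G : (Fin (l + m) → ℂ) → (Fin m → ℂ))
    (hGdef : ∀ z i, G z i = (∏ j, z (Fin.castAdd m j) ^ d j) * z (Fin.natAdd l i) ^ e)
    (z : Fin (l + m) → ℂ) (hz : ∀ i, z i ≠ 0)
    (Cvec : Fin l → Fin (l + m) → ℂ)
    (hC : ∀ j, Cvec j = fun i => Fin.addCases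
      (fun j' : Fin l => if j' = j then (e : ℂ) * z (Fin.castAdd m j) else 0)
      (fun i' : Fin m => -(d j : ℂ) * z (Fin.natAdd l i')) i) :
    LinearIndependent ℂ Cvec ∧
    Submodule.span ℂ (Set.range Cvec) = LinearMap.ker (fderiv ℂ G z).toLinearMap :=
  stmt15_general d e he G hGdef z hz Cvec hC
end
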